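/- arXiv:2005.04759 — 4 statements merged into one kernel-verified Lean document; each statement's English description precedes it below -/
import Mathlib

section
/- Let k ≥ 2, z, n ∈ Z_+ and u = (z, z+1, ..., z+n-1). The map sending c to c' where c'_j = c_j if c_j ≤ z and c'_j = z+s if c_j = z+sk, is a bijection from the set of permutation-invariant parking sequences for ((k^n); z) to the set of u-parking functions of length n. -/
open Finset

/-- The first empty spot `j` with `c ≤ j ≤ M` (street spots are `1..M`). -/
def firstEmpty (occ : Finset ℕ) (M c : ℕ) : Option ℕ :=
  (List.range' c (M + 1 - c)).find? (fun j => decide (j ∉ occ))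

/-- Park cars with preferences `cs` and lengths `ys` on a street with spots `1..M`,
where `occ` is the set of already-occupied spots.  Returns the list of starting
spots of the cars (in order of entry) if all cars can park. -/
def parkAux (M : ℕ) : Finset ℕ → List ℕ → List ℕ → Option (List ℕ)
  | _, [], [] => some []
  | occ, c :: cs, y :: ys =>
    match firstEmpty occ M c with
    | none => none
    | some j =>
      if (∀ i ∈ Finset.Ico j (j + y), i ∉ occ) ∧ j + y - 1 ≤ M then
        (parkAux M (occ ∪ Finset.Ico j (j + y)) cs ys).map (j :: ·)
      else none
  | _, _, _ => none

/-- Outcome of the parking process for length vector `ys`, preference sequence `cs`,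
and trailer parameter `z` (the trailer occupies spots `1,…,z-1`); the street has
`z - 1 + ys.sum` spots. -/
def parkResult (ys cs : List ℕ) (z : ℕ) : Option (List ℕ) :=
  parkAux (z - 1 + ys.sum) (Finset.Ico 1 z) cs ys

/-- `cs` is a parking sequence for `(ys; z)`. -/
def IsParkingSeq (ys cs : List ℕ) (z : ℕ) : Prop :=
  cs.length = ys.length ∧ (∀ c ∈ cs, 1 ≤ c) ∧ (parkResult ys cs z).isSome = true

/-- Starting spots of the standard (no-gap, in order) final configuration. -/
def standardStarts (z : ℕ) : List ℕ → List ℕ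
  | [] => []
  | y :: ys => z :: standardStarts (z + y) ys

/-- `cs` parks `ys` in the standard order `T, C₁, …, Cₙ`. -/
def ParksStandard (ys cs : List ℕ) (z : ℕ) : Prop :=
  parkResult ys cs z = some (standardStarts z ys)

/-- `cs` is a permutation-invariant parking sequence for `(ys; z)`. -/
def PermInvariant (ys cs : List ℕ) (z : ℕ) : Prop :=
  ∀ cs' : List ℕ, cs'.Perm cs → IsParkingSeq ys cs' z

/-- `cs` is a strong parking sequence for `{ys; z}`. -/
def StrongParkingSeq (ys cs : List ℕ) (z : ℕ) : Prop :=
  ∀ ys' : List ℕ, ys'.Perm ys → IsParkingSeq ys' cs z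

/-- The nondecreasing rearrangement (order statistics) of a list. -/
def orderStats (l : List ℕ) : List ℕ :=
  Multiset.sort (l : Multiset ℕ) (· ≤ ·)

/-- `xs` is a `u`-parking function. -/
def IsUPF (u xs : List ℕ) : Prop :=
  xs.length = u.length ∧ (∀ x ∈ xs, 1 ≤ x) ∧
    ∀ i < u.length, (orderStats xs).getD i 0 ≤ u.getD i 0

/-!
Cars of length `k` whose preferences are at most `z` or of the form `z + s k` only ever occupy the
blocks `[z + t k, z + (t + 1) k)` behind the trailer, each car taking the first free block with
index at least `(c - z) / k`. Such a sequence therefore parks in every order as soon as Hall's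
condition holds for these block preferences, which is what `c_(i) ≤ z + i k` says.

Conversely, a preference `c > z` not of this form cannot enter first: all cars have length `k`,
so the number of occupied spots in `[z, c)` stays divisible by `k`, while in the end all `c - z`
of them are occupied. And if at least `n - i` cars prefer a spot beyond `z + i k`, letting them enter first
they need `(n - i) k` of the only `(n - i) k - 1` spots there.

Finally `c ↦ z + (c - z) / k` and `x ↦ z + (x - z) k` are mutually inverse monotone relabellings
matching these conditions with those of a `u`-parking function.
-/

theorem orderStats_perm (l : List ℕ) : (orderStats l).Perm l := by
  rw [← Multiset.coe_eq_coe]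
  exact Multiset.sort_eq _ _

theorem orderStats_eq_of_perm {l l' : List ℕ} (h : l.Perm l') : orderStats l = orderStats l' := by
  rw [orderStats, orderStats, Multiset.coe_eq_coe.2 h]

theorem pairwise_orderStats (l : List ℕ) : (orderStats l).Pairwise (· ≤ ·) :=
  Multiset.pairwise_sort _ _

theorem length_orderStats (l : List ℕ) : (orderStats l).length = l.length :=
  (orderStats_perm l).length_eq

theorem orderStats_map {f : ℕ → ℕ} (hf : Monotone f) (l : List ℕ) :
    orderStats (l.map f) = (orderStats l).map f :=
  ((orderStats_perm _).trans ((orderStats_perm l).map f).symm).eq_of_pairwise'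
    (pairwise_orderStats _) ((pairwise_orderStats l).map f fun _ _ h => hf h)

theorem getD_map_of_lt (f : ℕ → ℕ) {l : List ℕ} {i : ℕ} (h : i < l.length) :
    (l.map f).getD i 0 = f (l.getD i 0) := by
  rw [List.getD_eq_getElem _ _ (by simpa using h), List.getD_eq_getElem _ _ h, List.getElem_map]

theorem length_sub_le_countP_lt {l : List ℕ} (hl : l.Pairwise (· ≤ ·)) {i b : ℕ}
    (hi : i < l.length) (hb : b < l.getD i 0) : l.length - i ≤ l.countP (b < ·) := by
  rw [List.getD_eq_getElem _ _ hi] at hb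
  have hdrop : (l.drop i).countP (b < ·) = (l.drop i).length := by
    refine List.countP_eq_length.2 fun a ha => ?_
    obtain ⟨j, hj, rfl⟩ := List.mem_drop_iff_getElem.1 ha
    rcases j.eq_zero_or_pos with rfl | hj0
    · simpa using hb
    · exact decide_eq_true (hb.trans_le (List.pairwise_iff_getElem.1 hl _ _ _ _ (by omega)))
  calc l.length - i = (l.drop i).countP (b < ·) := by rw [hdrop, List.length_drop]
    _ ≤ l.countP (b < ·) := (List.drop_sublist i l).countP_le

theorem countP_ge_le_length_sub {l : List ℕ} (hl : ∀ i (h : i < l.length), l[i] ≤ i) (s : ℕ) :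
    l.countP (s ≤ ·) ≤ l.length - s := by
  have htake : (l.take s).countP (s ≤ ·) = 0 := by
    refine List.countP_eq_zero.2 fun a ha => ?_
    obtain ⟨j, hj, rfl⟩ := List.mem_take_iff_getElem.1 ha
    have := hl j (by omega)
    simp only [decide_eq_true_eq]
    omega
  calc l.countP (s ≤ ·) = (l.take s).countP (s ≤ ·) + (l.drop s).countP (s ≤ ·) := by
        rw [← List.countP_append, List.take_append_drop]
    _ ≤ l.length - s := by
        rw [htake, zero_add, ← List.length_drop]
        exact List.countP_le_length

theorem firstEmpty_eq_some_iff {occ : Finset ℕ} {M c j : ℕ} :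
    firstEmpty occ M c = some j ↔ c ≤ j ∧ j ≤ M ∧ j ∉ occ ∧ ∀ i, c ≤ i → i < j → i ∈ occ := by
  simp only [firstEmpty, List.find?_eq_some_iff_getElem, List.getElem_range', List.length_range',
    decide_eq_true_eq, Bool.not_eq_true', decide_eq_false_iff_not, not_not, one_mul]
  constructor
  · rintro ⟨hj, i, hi, rfl, hbefore⟩
    refine ⟨by omega, by omega, hj, fun i' h1 h2 => ?_⟩
    simpa [Nat.add_sub_cancel' h1] using hbefore (i' - c) (by omega)
  · rintro ⟨hcj, hjM, hj, hbefore⟩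
    exact ⟨hj, j - c, by omega, by omega, fun i hi => hbefore _ (by omega) (by omega)⟩

theorem parkAux_cons_isSome_iff {M : ℕ} {occ : Finset ℕ} {c y : ℕ} {cs ys : List ℕ} :
    (parkAux M occ (c :: cs) (y :: ys)).isSome ↔ ∃ j, firstEmpty occ M c = some j ∧
      (∀ i ∈ Ico j (j + y), i ∉ occ) ∧ j + y - 1 ≤ M ∧
        (parkAux M (occ ∪ Ico j (j + y)) cs ys).isSome := by
  simp only [parkAux]
  cases firstEmpty occ M c with
  | none => simp
  | some j =>
    dsimp only
    split_ifs with h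
    · simp_all
    · simp only [Option.isSome_none, Bool.false_eq_true, false_iff, not_exists, not_and,
        Option.some.injEq]
      rintro _ rfl hfree hfit
      exact absurd ⟨hfree, hfit⟩ h

theorem parkAux_isSome_of_append {M : ℕ} {cs₁ cs₂ ys₁ ys₂ : List ℕ} (hlen : cs₁.length = ys₁.length)
    {occ : Finset ℕ} (h : (parkAux M occ (cs₁ ++ cs₂) (ys₁ ++ ys₂)).isSome) :
    (parkAux M occ cs₁ ys₁).isSome := by
  induction cs₁ generalizing ys₁ occ with
  | nil => simp [List.length_eq_zero_iff.1 hlen.symm, parkAux]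
  | cons c cs ih =>
    obtain ⟨y, ys, rfl⟩ := List.exists_cons_of_length_eq_add_one hlen.symm
    obtain ⟨j, hj, hfree, hfit, hrest⟩ := parkAux_cons_isSome_iff.1 h
    exact parkAux_cons_isSome_iff.2 ⟨j, hj, hfree, hfit, ih (by simpa using hlen) hrest⟩

theorem exists_card_eq_of_parkAux_isSome (P : Finset ℕ → Prop) {M : ℕ} {cs ys : List ℕ}
    (step : ∀ o c y j, P o → c ∈ cs → y ∈ ys → c ≤ j → j + y ≤ M + 1 →
      Disjoint o (Ico j (j + y)) → P (o ∪ Ico j (j + y)))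
    {occ : Finset ℕ} (hocc : P occ) (h : (parkAux M occ cs ys).isSome) :
    ∃ occF, P occF ∧ #occF = #occ + ys.sum := by
  induction cs generalizing ys occ with
  | nil =>
    cases ys with
    | nil => exact ⟨occ, hocc, by simp⟩
    | cons => simp [parkAux] at h
  | cons c cs ih =>
    cases ys with
    | nil => simp [parkAux] at h
    | cons y ys =>
      obtain ⟨j, hj, hfree, hfit, hrest⟩ := parkAux_cons_isSome_iff.1 h
      obtain ⟨hcj, hjM, -⟩ := firstEmpty_eq_some_iff.1 hj
      have hdisj : Disjoint occ (Ico j (j + y)) := disjoint_right.2 hfree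
      obtain ⟨occF, hF, hcard⟩ := ih
        (fun o c' y' j' ho hc hy => step o c' y' j' ho (by simp [hc]) (by simp [hy]))
        (step occ c y j hocc (by simp) (by simp) hcj (by omega) hdisj) hrest
      refine ⟨occF, hF, ?_⟩
      rw [hcard, card_union_of_disjoint hdisj, Nat.card_Ico, List.sum_cons]
      omega

section Necessity

variable {z k : ℕ}

theorem sum_le_of_parkAux_isSome {M b : ℕ} {occ : Finset ℕ} {cs ys : List ℕ}
    (hcs : ∀ c ∈ cs, b < c) (h : (parkAux M occ cs ys).isSome) : ys.sum ≤ M - b := by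
  obtain ⟨occF, hsub, hcard⟩ := exists_card_eq_of_parkAux_isSome (· ⊆ occ ∪ Ioc b M)
    (fun o c y j ho hc _ hcj hfit _ => union_subset ho fun i hi => by
      have := hcs c hc
      simp only [mem_Ico] at hi
      simp only [mem_union, mem_Ioc]
      omega)
    subset_union_left h
  have := (card_le_card hsub).trans (card_union_le _ _)
  rw [Nat.card_Ioc] at this
  omega

theorem card_union_Ico_inter_Ico_mod {o : Finset ℕ} {c j : ℕ} (hc : c ∈ o) (hzj : z ≤ j)
    (hdisj : Disjoint o (Ico j (j + k))) :
    #((o ∪ Ico j (j + k)) ∩ Ico z c) % k = #(o ∩ Ico z c) % k := by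
  have hcj : c < j ∨ j + k ≤ c := by
    have := disjoint_left.1 hdisj hc
    rw [mem_Ico] at this
    omega
  rw [union_inter_distrib_right,
    card_union_of_disjoint ((hdisj.mono_left inter_subset_left).mono_right inter_subset_left)]
  rcases hcj with hcj | hcj
  · rw [show Ico j (j + k) ∩ Ico z c = ∅ by ext; simp only [mem_inter, mem_Ico]; simp; omega,
      card_empty, add_zero]
  · rw [show Ico j (j + k) ∩ Ico z c = Ico j (j + k) by ext; simp only [mem_inter, mem_Ico]; omega,
      Nat.card_Ico, Nat.add_sub_cancel_left, Nat.add_mod_right]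

theorem exists_card_inter_Ico_mod_of_parkAux_isSome (hk : 0 < k) {M c : ℕ} {occ : Finset ℕ}
    {cs : List ℕ} (hcs : ∀ c ∈ cs, 1 ≤ c) (hocc : occ ⊆ Ico 1 (M + 1)) (htrailer : Ico 1 z ⊆ occ)
    (hc : c ∈ occ) (h : (parkAux M occ cs (List.replicate cs.length k)).isSome) :
    ∃ occF ⊆ Ico 1 (M + 1), #occF = #occ + cs.length * k ∧
      #(occF ∩ Ico z c) % k = #(occ ∩ Ico z c) % k := by
  obtain ⟨occF, ⟨hsub, -, -, hmod⟩, hcard⟩ := exists_card_eq_of_parkAux_isSome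
    (fun o => o ⊆ Ico 1 (M + 1) ∧ Ico 1 z ⊆ o ∧ c ∈ o ∧
      #(o ∩ Ico z c) % k = #(occ ∩ Ico z c) % k)
    (fun o c' y j ⟨hsub, htrailer, hc, hmod⟩ hc' hy hc'j hfit hdisj => by
      obtain rfl := List.eq_of_mem_replicate hy
      have hc'1 := hcs c' hc'
      have hj : j ∉ o := disjoint_right.1 hdisj (by simp [hk])
      have hzj : z ≤ j := by
        by_contra
        exact hj (htrailer (by rw [mem_Ico]; omega))
      refine ⟨union_subset hsub fun i hi => ?_, htrailer.trans subset_union_left,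
        mem_union_left _ hc, by rw [card_union_Ico_inter_Ico_mod hc hzj hdisj, hmod]⟩
      rw [mem_Ico] at hi ⊢
      omega)
    ⟨hocc, htrailer, hc, rfl⟩ h
  exact ⟨occF, hsub, by simpa using hcard, hmod⟩

theorem exists_eq_add_mul_of_parkResult_cons_isSome (hz : 0 < z) (hk : 0 < k) {c : ℕ}
    (hzc : z < c) {cs : List ℕ} (hcs : ∀ c ∈ cs, 1 ≤ c)
    (h : (parkResult (List.replicate (cs.length + 1) k) (c :: cs) z).isSome) :
    ∃ s, c = z + s * k := by
  set M := z - 1 + (cs.length + 1) * k with hM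
  rw [parkResult, List.sum_replicate, smul_eq_mul, List.replicate_succ] at h
  obtain ⟨j, hj, -, hfit, hrest⟩ := parkAux_cons_isSome_iff.1 h
  obtain rfl : c = j := by
    obtain ⟨hcj, -, -, hbefore⟩ := firstEmpty_eq_some_iff.1 hj
    by_contra hne
    have := hbefore c le_rfl (by omega)
    rw [mem_Ico] at this
    omega
  have hdisj : Disjoint (Ico 1 z) (Ico c (c + k)) :=
    disjoint_left.2 fun i hi hi' => by rw [mem_Ico] at hi hi'; omega
  obtain ⟨occF, hsub, hcard, hmod⟩ := exists_card_inter_Ico_mod_of_parkAux_isSome hk hcs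
    (union_subset (fun i hi => by rw [mem_Ico] at hi ⊢; omega)
      (fun i hi => by rw [mem_Ico] at hi ⊢; omega))
    subset_union_left (mem_union_right _ (left_mem_Ico.2 (by omega))) hrest
  have hfull : occF = Ico 1 (M + 1) := by
    refine eq_of_subset_of_card_le hsub ?_
    rw [hcard, card_union_of_disjoint hdisj, Nat.card_Ico, Nat.card_Ico, Nat.card_Ico, hM,
      Nat.add_mul]
    omega
  rw [hfull, inter_eq_right.2 (fun i hi => by rw [mem_Ico] at hi ⊢; omega), Nat.card_Ico,
    show (Ico 1 z ∪ Ico c (c + k)) ∩ Ico z c = ∅ by ext; simp; omega, card_empty] at hmod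
  exact ⟨(c - z) / k, by rw [Nat.div_mul_cancel (Nat.dvd_of_mod_eq_zero hmod)]; omega⟩

variable {n : ℕ}

theorem of_mem_of_permInvariant (hz : 0 < z) (hk : 0 < k) {cs : List ℕ}
    (h : PermInvariant (List.replicate n k) cs z) {c : ℕ} (hc : c ∈ cs) :
    1 ≤ c ∧ (c ≤ z ∨ ∃ s, c = z + s * k) := by
  obtain ⟨hlen, hpos, hpark⟩ := h _ (List.perm_cons_erase hc).symm
  refine ⟨hpos c (by simp), (le_or_gt c z).imp_right fun hzc => ?_⟩
  simp only [List.length_cons, List.length_replicate] at hlen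
  rw [← hlen] at hpark
  exact exists_eq_add_mul_of_parkResult_cons_isSome hz hk hzc
    (fun c' hc' => hpos c' (by simp [hc'])) hpark

theorem orderStats_getD_le_of_permInvariant (hz : 0 < z) (hk : 0 < k) {cs : List ℕ}
    (h : PermInvariant (List.replicate n k) cs z) {i : ℕ} (hi : i < n) :
    (orderStats cs).getD i 0 ≤ z + i * k := by
  by_contra! hlt
  have hlen : cs.length = n := by simpa using (h cs (.refl cs)).1
  set p : ℕ → Bool := fun c => z + i * k < c with hp
  have hcount : n - i ≤ cs.countP p := by
    have := length_sub_le_countP_lt (pairwise_orderStats cs) (by rw [length_orderStats]; omega) hlt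
    rwa [length_orderStats, hlen, (orderStats_perm cs).countP_eq] at this
  -- let the cars preferring a spot beyond `z + i * k` enter first
  have hpark := (h _ (List.filter_append_perm p cs)).2.2
  rw [parkResult, List.sum_replicate, smul_eq_mul, List.countP_eq_length_filter] at *
  rw [show List.replicate n k = List.replicate (cs.filter p).length k ++
    List.replicate (n - (cs.filter p).length) k by
      rw [← List.replicate_add, Nat.add_sub_cancel' (hlen ▸ List.length_filter_le p cs)]] at hpark
  have := sum_le_of_parkAux_isSome (b := z + i * k)
    (fun c hc => by simpa [hp] using (List.mem_filter.1 hc).2)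
    (parkAux_isSome_of_append (by simp) hpark)
  rw [List.sum_replicate, smul_eq_mul] at this
  have h1 : (n - i) * k ≤ (cs.filter p).length * k := Nat.mul_le_mul_right k hcount
  have h2 : (n - i) * k = n * k - i * k := Nat.sub_mul n i k
  have h3 : i * k + k ≤ n * k := by rw [← Nat.succ_mul]; exact Nat.mul_le_mul_right k hi
  omega

end Necessity

def blockOcc (z k : ℕ) (T : Finset ℕ) : Finset ℕ :=
  Ico 1 z ∪ T.biUnion fun t => Ico (z + t * k) (z + t * k + k)

-- `F` is the set of free blocks, `bs` lists the blocks preferred by the cars still to park.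
def HallCondition (F : Finset ℕ) (bs : List ℕ) : Prop :=
  ∀ s, bs.countP (s ≤ ·) ≤ #{t ∈ F | s ≤ t}

theorem HallCondition.nonempty {F : Finset ℕ} {b : ℕ} {bs : List ℕ}
    (h : HallCondition F (b :: bs)) : {t ∈ F | b ≤ t}.Nonempty := by
  rw [← card_pos]
  have := h b
  rw [List.countP_cons_of_pos (by simp)] at this
  omega

theorem HallCondition.erase {F : Finset ℕ} {b m : ℕ} {bs : List ℕ}
    (h : HallCondition F (b :: bs)) (hm : m ∈ F) (hbm : b ≤ m)
    (hmin : ∀ t ∈ F, b ≤ t → m ≤ t) : HallCondition (F.erase m) bs := by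
  intro s
  rcases lt_or_ge m s with hms | hsm
  · rw [show {t ∈ F.erase m | s ≤ t} = {t ∈ F | s ≤ t} by
      ext t; simp only [mem_filter, mem_erase]; constructor
      · exact fun h => ⟨h.1.2, h.2⟩
      · exact fun h => ⟨⟨by omega, h.1⟩, h.2⟩]
    exact (List.sublist_cons_self b bs).countP_le.trans (h s)
  · -- `F` has no block in `[b, m)`, so the threshold `s ≤ m` may be lowered to `min s b`
    have hfilter : {t ∈ F.erase m | s ≤ t} = {t ∈ F | min s b ≤ t}.erase m := by
      ext t
      simp only [mem_filter, mem_erase]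
      constructor
      · exact fun ⟨⟨hne, htF⟩, hst⟩ => ⟨hne, htF, by omega⟩
      · rintro ⟨hne, htF, hst⟩
        refine ⟨⟨hne, htF⟩, ?_⟩
        by_contra hlt
        have := hmin t htF (by omega)
        omega
    have hcount := h (min s b)
    rw [List.countP_cons_of_pos (by simp)] at hcount
    calc bs.countP (s ≤ ·) ≤ bs.countP (min s b ≤ ·) :=
          List.countP_mono_left fun x _ hx => by simp only [decide_eq_true_eq] at hx ⊢; omega
      _ ≤ #{t ∈ F | min s b ≤ t} - 1 := by omega
      _ = #{t ∈ F.erase m | s ≤ t} := by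
          rw [hfilter, card_erase_of_mem (mem_filter.2 ⟨hm, by omega⟩)]

section Sufficiency

variable {z k n : ℕ}

theorem mem_blockOcc (hk : 0 < k) {T : Finset ℕ} {j : ℕ} :
    j ∈ blockOcc z k T ↔ (1 ≤ j ∧ j < z) ∨ (z ≤ j ∧ (j - z) / k ∈ T) := by
  simp only [blockOcc, mem_union, mem_Ico, mem_biUnion]
  refine or_congr_right ⟨?_, ?_⟩
  · rintro ⟨t, ht, h1, h2⟩
    have : (j - z) / k = t := (Nat.div_eq_iff hk).2 ⟨by omega, by omega⟩
    exact ⟨by omega, this ▸ ht⟩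
  · rintro ⟨hzj, ht⟩
    refine ⟨_, ht, ?_⟩
    have := (Nat.div_eq_iff hk (x := j - z)).1 rfl
    omega

theorem parkAux_blockOcc_cons_isSome (hk : 0 < k) {T : Finset ℕ} {c m : ℕ} {cs ys : List ℕ}
    (hc : 1 ≤ c ∧ (c ≤ z ∨ ∃ s, c = z + s * k)) (hm : m < n) (hmT : m ∉ T)
    (hcm : (c - z) / k ≤ m) (hT : ∀ t, (c - z) / k ≤ t → t < m → t ∈ T)
    (h : (parkAux (z - 1 + n * k) (blockOcc z k (insert m T)) cs ys).isSome) :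
    (parkAux (z - 1 + n * k) (blockOcc z k T) (c :: cs) (k :: ys)).isSome := by
  have hcblock : c ≤ z + (c - z) / k * k := by
    rcases hc.2 with hcz | ⟨s, rfl⟩
    · omega
    · rw [Nat.add_sub_cancel_left, Nat.mul_div_cancel _ hk]
  have hcm' : (c - z) / k * k ≤ m * k := Nat.mul_le_mul_right k hcm
  have hmk : m * k + k ≤ n * k := by rw [← Nat.succ_mul]; exact Nat.mul_le_mul_right k hm
  have hfree : ∀ i, z + m * k ≤ i → i < z + m * k + k → i ∉ blockOcc z k T := by
    intro i h1 h2
    rw [mem_blockOcc hk, (Nat.div_eq_iff hk (y := m)).2 ⟨by omega, by omega⟩]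
    rintro (h | ⟨-, h⟩)
    · omega
    · exact hmT h
  have hfirst : firstEmpty (blockOcc z k T) (z - 1 + n * k) c = some (z + m * k) := by
    refine firstEmpty_eq_some_iff.2 ⟨by omega, by omega, hfree _ le_rfl (by omega), ?_⟩
    intro i hci hij
    rw [mem_blockOcc hk]
    by_cases hiz : i < z
    · exact Or.inl ⟨by omega, hiz⟩
    · exact Or.inr ⟨by omega, hT ((i - z) / k) (Nat.div_le_div_right (by omega))
        ((Nat.div_lt_iff_lt_mul hk).2 (by omega))⟩
  have hocc : blockOcc z k T ∪ Ico (z + m * k) (z + m * k + k) = blockOcc z k (insert m T) := by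
    rw [blockOcc, blockOcc, biUnion_insert, union_assoc, union_comm _ (Ico _ _)]
  refine parkAux_cons_isSome_iff.2 ⟨z + m * k, hfirst,
    fun i hi => hfree i (mem_Ico.1 hi).1 (mem_Ico.1 hi).2, by omega, ?_⟩
  rwa [hocc]

theorem parkAux_blockOcc_isSome (hk : 0 < k) : ∀ {cs : List ℕ} {T : Finset ℕ},
    (∀ c ∈ cs, 1 ≤ c ∧ (c ≤ z ∨ ∃ s, c = z + s * k)) →
    HallCondition (range n \ T) (cs.map fun c => (c - z) / k) →
    (parkAux (z - 1 + n * k) (blockOcc z k T) cs (List.replicate cs.length k)).isSome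
  | [], _, _, _ => by simp [parkAux]
  | c :: cs, T, hcs, hall => by
    rw [List.map_cons] at hall
    obtain ⟨m, hm, hmin⟩ := exists_min_image _ id hall.nonempty
    simp only [mem_filter, mem_sdiff, mem_range, id] at hm hmin
    have hrest := hall.erase (mem_sdiff.2 (by simpa using hm.1)) hm.2
      fun t ht hbt => hmin t ⟨by simpa using ht, hbt⟩
    rw [← sdiff_insert] at hrest
    rw [List.length_cons, List.replicate_succ]
    refine parkAux_blockOcc_cons_isSome hk (hcs c (by simp)) hm.1.1 hm.1.2 hm.2
      (fun t h1 h2 => ?_) (parkAux_blockOcc_isSome hk (fun c' hc' => hcs c' (by simp [hc'])) hrest)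
    by_contra ht
    have := hmin t ⟨⟨by omega, ht⟩, h1⟩
    omega

theorem hallCondition_range_of_orderStats {cs : List ℕ} (hlen : cs.length = n)
    (hstats : ∀ i < n, (orderStats cs).getD i 0 ≤ z + i * k) :
    HallCondition (range n) (cs.map fun c => (c - z) / k) := by
  intro s
  have hle : ∀ i (h : i < ((orderStats cs).map fun c => (c - z) / k).length),
      ((orderStats cs).map fun c => (c - z) / k)[i] ≤ i := by
    intro i h
    rw [List.length_map, length_orderStats] at h
    have := hstats i (hlen ▸ h)
    rw [List.getD_eq_getElem _ _ (by rw [length_orderStats]; exact h)] at this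
    rw [List.getElem_map]
    exact Nat.div_le_of_le_mul (by rw [Nat.mul_comm]; omega)
  rw [← ((orderStats_perm cs).map _).countP_eq,
    show {t ∈ range n | s ≤ t} = Ico s n by ext; simp only [mem_filter, mem_range, mem_Ico]; omega,
    Nat.card_Ico]
  simpa [length_orderStats, hlen] using countP_ge_le_length_sub hle s

theorem permInvariant_replicate_of (hk : 0 < k) {cs : List ℕ} (hlen : cs.length = n)
    (hcs : ∀ c ∈ cs, 1 ≤ c ∧ (c ≤ z ∨ ∃ s, c = z + s * k))
    (hstats : ∀ i < n, (orderStats cs).getD i 0 ≤ z + i * k) :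
    PermInvariant (List.replicate n k) cs z := by
  intro cs' hperm
  have hlen' : cs'.length = n := hperm.length_eq.trans hlen
  refine ⟨by simp [hlen'], fun c hc => (hcs c (hperm.subset hc)).1, ?_⟩
  have := parkAux_blockOcc_isSome (n := n) hk (T := ∅) (fun c hc => hcs c (hperm.subset hc))
    (by simpa using hallCondition_range_of_orderStats hlen' (orderStats_eq_of_perm hperm ▸ hstats))
  rwa [hlen', blockOcc, biUnion_empty, union_empty, ← smul_eq_mul, ← List.sum_replicate] at this

end Sufficiency

theorem permInvariant_replicate_iff {z k n : ℕ} (hz : 0 < z) (hk : 0 < k) {cs : List ℕ} :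
    PermInvariant (List.replicate n k) cs z ↔ cs.length = n ∧
      (∀ c ∈ cs, 1 ≤ c ∧ (c ≤ z ∨ ∃ s, c = z + s * k)) ∧
      ∀ i < n, (orderStats cs).getD i 0 ≤ z + i * k :=
  ⟨fun h => ⟨by simpa using (h cs (.refl cs)).1, fun _ hc => of_mem_of_permInvariant hz hk h hc,
      fun _ hi => orderStats_getD_le_of_permInvariant hz hk h hi⟩,
    fun ⟨hlen, hcs, hstats⟩ => permInvariant_replicate_of hk hlen hcs hstats⟩

def shrink (z k c : ℕ) : ℕ := if c ≤ z then c else z + (c - z) / k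

def stretch (z k x : ℕ) : ℕ := if x ≤ z then x else z + (x - z) * k

section Relabelling

variable {z k : ℕ}

theorem monotone_shrink : Monotone (shrink z k) := by
  intro a b hab
  unfold shrink
  split_ifs with ha hb hb
  · exact hab
  · exact ha.trans (Nat.le_add_right z _)
  · omega
  · exact Nat.add_le_add_left (Nat.div_le_div_right (Nat.sub_le_sub_right hab z)) z

theorem monotone_stretch : Monotone (stretch z k) := by
  intro a b hab
  unfold stretch
  split_ifs with ha hb hb
  · exact hab
  · exact ha.trans (Nat.le_add_right z _)
  · omega
  · exact Nat.add_le_add_left (Nat.mul_le_mul_right k (Nat.sub_le_sub_right hab z)) z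

theorem one_le_shrink (hz : 0 < z) {c : ℕ} (hc : 1 ≤ c) : 1 ≤ shrink z k c := by
  unfold shrink
  split_ifs
  · exact hc
  · exact hz.trans_le (Nat.le_add_right z _)

theorem one_le_stretch (hz : 0 < z) {x : ℕ} (hx : 1 ≤ x) : 1 ≤ stretch z k x := by
  unfold stretch
  split_ifs
  · exact hx
  · exact hz.trans_le (Nat.le_add_right z _)

theorem shrink_le {c i : ℕ} (hc : c ≤ z + i * k) : shrink z k c ≤ z + i := by
  unfold shrink
  split_ifs with hcz
  · exact hcz.trans (Nat.le_add_right z i)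
  · exact Nat.add_le_add_left (Nat.div_le_of_le_mul (by rw [Nat.mul_comm]; omega)) z

theorem stretch_le {x i : ℕ} (hx : x ≤ z + i) : stretch z k x ≤ z + i * k := by
  unfold stretch
  split_ifs with hxz
  · exact hxz.trans (Nat.le_add_right z _)
  · exact Nat.add_le_add_left (Nat.mul_le_mul_right k (by omega)) z

theorem stretch_shrink (hk : 0 < k) {c : ℕ} (hc : c ≤ z ∨ ∃ s, c = z + s * k) :
    stretch z k (shrink z k c) = c := by
  by_cases hcz : c ≤ z
  · rw [shrink, if_pos hcz, stretch, if_pos hcz]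
  · obtain ⟨s, rfl⟩ := hc.resolve_left hcz
    have hs : 0 < s := Nat.pos_of_ne_zero fun h => hcz (by simp [h])
    rw [shrink, if_neg hcz, Nat.add_sub_cancel_left, Nat.mul_div_cancel _ hk, stretch,
      if_neg (by omega), Nat.add_sub_cancel_left]

theorem shrink_stretch (hk : 0 < k) (x : ℕ) : shrink z k (stretch z k x) = x := by
  by_cases hxz : x ≤ z
  · rw [stretch, if_pos hxz, shrink, if_pos hxz]
  · have : 0 < (x - z) * k := Nat.mul_pos (by omega) hk
    rw [stretch, if_neg hxz, shrink, if_neg (by omega), Nat.add_sub_cancel_left,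
      Nat.mul_div_cancel _ hk]
    omega

end Relabelling

theorem isUPF_map_shrink {z k n : ℕ} (hz : 0 < z) (hk : 0 < k) {cs : List ℕ}
    (h : PermInvariant (List.replicate n k) cs z) :
    IsUPF ((List.range n).map (fun i => z + i)) (cs.map (shrink z k)) := by
  obtain ⟨hlen, hcs, hstats⟩ := (permInvariant_replicate_iff hz hk).1 h
  refine ⟨by simp [hlen], fun x hx => ?_, fun i hi => ?_⟩
  · obtain ⟨c, hc, rfl⟩ := List.mem_map.1 hx
    exact one_le_shrink hz (hcs c hc).1
  · rw [List.length_map, List.length_range] at hi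
    rw [orderStats_map monotone_shrink, getD_map_of_lt _ (by rwa [length_orderStats, hlen]),
      show ((List.range n).map (z + ·)).getD i 0 = z + i by simp [hi]]
    exact shrink_le (hstats i hi)

theorem permInvariant_map_stretch {z k n : ℕ} (hz : 0 < z) (hk : 0 < k) {xs : List ℕ}
    (h : IsUPF ((List.range n).map (fun i => z + i)) xs) :
    PermInvariant (List.replicate n k) (xs.map (stretch z k)) z := by
  obtain ⟨hlen, hpos, hstats⟩ := h
  simp only [List.length_map, List.length_range] at hlen hstats
  refine (permInvariant_replicate_iff hz hk).2 ⟨by rw [List.length_map, hlen], fun c hc => ?_,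
    fun i hi => ?_⟩
  · obtain ⟨x, hx, rfl⟩ := List.mem_map.1 hc
    refine ⟨one_le_stretch hz (hpos x hx), ?_⟩
    unfold stretch
    split_ifs with hxz
    · exact Or.inl hxz
    · exact Or.inr ⟨x - z, rfl⟩
  · rw [orderStats_map monotone_stretch, getD_map_of_lt _ (by rwa [length_orderStats, hlen])]
    exact stretch_le (by simpa [hi] using hstats i hi)

theorem stmt10_general (n k z : ℕ) (hk : 2 ≤ k) (hz : 0 < z) :
    Set.BijOn (fun cs : List ℕ => cs.map (fun c => if c ≤ z then c else z + (c - z) / k))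
      {cs : List ℕ | PermInvariant (List.replicate n k) cs z}
      {xs : List ℕ | IsUPF ((List.range n).map (fun i => z + i)) xs} := by
  have hk0 : 0 < k := by omega
  show Set.BijOn (List.map (shrink z k)) _ _
  refine Set.InvOn.bijOn (f' := List.map (stretch z k)) ⟨fun cs hcs => ?_, fun xs _ => ?_⟩
    (fun cs hcs => isUPF_map_shrink hz hk0 hcs) (fun xs hxs => permInvariant_map_stretch hz hk0 hxs)
  · obtain ⟨-, hcs, -⟩ := (permInvariant_replicate_iff hz hk0).1 hcs
    rw [List.map_map]
    exact (List.map_congr_left fun c hc => stretch_shrink hk0 (hcs c hc).2).trans (List.map_id cs)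
  · rw [List.map_map]
    exact (List.map_congr_left fun x _ => shrink_stretch hk0 x).trans (List.map_id xs)

theorem stmt10 (n k z : ℕ) (hn : 0 < n) (hk : 2 ≤ k) (hz : 0 < z) :
    Set.BijOn (fun cs : List ℕ => cs.map (fun c => if c ≤ z then c else z + (c - z) / k))
      {cs : List ℕ | PermInvariant (List.replicate n k) cs z}
      {xs : List ℕ | IsUPF ((List.range n).map (fun i => z + i)) xs} :=
  stmt10_general n k z hk hz
end

section
/- Let n ≥ 2, 1 ≤ r < n, a < b positive integers, z ∈ Z_+, and y = (a^r, b^{n-r}) (r cars of length a followed by n-r cars of length b). If c is a permutation-invariant parking sequence for (y;z), then in the final parking configuration of c, all r cars of length a park within the interval of spots [z, z+ra-1]. -/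
open Finset

theorem parkAux_cons_eq_some {M c y : ℕ} {occ : Finset ℕ} {cs ys L : List ℕ} :
    parkAux M occ (c :: cs) (y :: ys) = some L ↔
      ∃ j L', firstEmpty occ M c = some j ∧ (∀ i ∈ Ico j (j + y), i ∉ occ) ∧ j + y - 1 ≤ M ∧
        parkAux M (occ ∪ Ico j (j + y)) cs ys = some L' ∧ L = j :: L' := by
  rw [parkAux]
  split
  · simp_all
  · rename_i j hfe
    split_ifs with hfit
    · simp only [Option.map_eq_some_iff, hfe, Option.some.injEq]
      constructor
      · rintro ⟨L', hL', rfl⟩; exact ⟨j, L', rfl, hfit.1, hfit.2, hL', rfl⟩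
      · rintro ⟨_, L', rfl, -, -, hL', rfl⟩; exact ⟨L', hL', rfl⟩
    · simp only [hfe, Option.some.injEq, false_iff]
      rintro ⟨_, L', rfl, hfree, hle, -⟩
      exact hfit ⟨hfree, hle⟩

theorem card_union_Ico {occ : Finset ℕ} {j y : ℕ} (h : ∀ i ∈ Ico j (j + y), i ∉ occ) :
    (occ ∪ Ico j (j + y)).card = occ.card + y := by
  rw [card_union_of_disjoint (disjoint_right.mpr h), Nat.card_Ico, Nat.add_sub_cancel_left]

theorem parkResult_cons_of_le {ys cs : List ℕ} {a w z : ℕ} (ha : 0 < a) (hw : 1 ≤ w)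
    (hwz : w ≤ z) :
    parkResult (a :: ys) (w :: cs) z = (parkResult ys cs (z + a)).map (z :: ·) := by
  have hfe : firstEmpty (Ico 1 z) (z - 1 + (a :: ys).sum) w = some z := by
    rw [firstEmpty_eq_some_iff]
    simp only [List.sum_cons, mem_Ico]
    exact ⟨hwz, by omega, by omega, fun i _ hiz => ⟨by omega, hiz⟩⟩
  have hfit : (∀ i ∈ Ico z (z + a), i ∉ Ico 1 z) ∧ z + a - 1 ≤ z - 1 + (a :: ys).sum := by
    simp only [mem_Ico, List.sum_cons]
    exact ⟨fun i hi hi' => by omega, by omega⟩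
  rw [parkResult, parkAux, hfe]
  dsimp only
  rw [if_pos hfit, Ico_union_Ico_eq_Ico (by omega) le_self_add, parkResult, List.sum_cons,
    show z - 1 + (a + ys.sum) = z + a - 1 + ys.sum by omega]

theorem Ico_subset_or_exists_notMem (occ : Finset ℕ) (z j : ℕ) :
    Ico z j ⊆ occ ∨ ∃ u, z < u ∧ u ≤ j ∧ u - 1 ∉ occ ∧ Ico u j ⊆ occ := by
  induction j with
  | zero => simp
  | succ j ih =>
    by_cases hj : j ∈ occ
    · have extend : ∀ v, Ico v j ⊆ occ → Ico v (j + 1) ⊆ occ := fun v h x hx => by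
        rw [mem_Ico] at hx
        obtain hxj | rfl := Nat.lt_or_eq_of_le (Nat.le_of_lt_succ hx.2)
        · exact h (mem_Ico.mpr ⟨hx.1, hxj⟩)
        · exact hj
      exact ih.imp (extend z) fun ⟨u, hzu, huj, hu, h⟩ => ⟨u, hzu, by omega, hu, extend u h⟩
    · rcases lt_or_ge j z with hjz | hzj
      · left; simp [Ico_eq_empty_of_le (by omega : j + 1 ≤ z)]
      · exact Or.inr ⟨j + 1, by omega, le_rfl, hj, by simp⟩

/-- `occ` is the set of occupied spots after cars of length `a` with preferences `done` have
parked behind the trailer `[1, z)`. The last clause holds since a car preferring a spot below a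
free spot `u - 1` cannot park beyond it. -/
def BlockInvariant (z a : ℕ) (occ : Finset ℕ) (done : List ℕ) : Prop :=
  Ico 1 z ⊆ occ ∧ occ.card ≤ z - 1 + done.length * a ∧
    ∀ u, z < u → u - 1 ∉ occ → (occ.filter (u ≤ ·)).card ≤ done.countP (u ≤ ·) * a

namespace BlockInvariant

variable {M z a c j : ℕ} {occ : Finset ℕ} {done : List ℕ}

theorem init (z a : ℕ) : BlockInvariant z a (Ico 1 z) [] := by
  refine ⟨subset_rfl, by simp, fun u hzu _ => ?_⟩
  rw [card_eq_zero.mpr (filter_eq_empty_iff.mpr fun x hx => by rw [mem_Ico] at hx; omega)]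
  exact Nat.zero_le _

theorem park (h : BlockInvariant z a occ done) (hfe : firstEmpty occ M c = some j)
    (hfree : ∀ i ∈ Ico j (j + a), i ∉ occ) :
    BlockInvariant z a (occ ∪ Ico j (j + a)) (c :: done) := by
  obtain ⟨htrailer, hcard, hright⟩ := h
  obtain ⟨-, -, -, hbefore⟩ := firstEmpty_eq_some_iff.mp hfe
  refine ⟨htrailer.trans subset_union_left, ?_, fun u hzu hu => ?_⟩
  · rw [card_union_Ico hfree, List.length_cons, Nat.succ_mul]
    omega
  have hu_occ : u - 1 ∉ occ := fun h => hu (mem_union_left _ h)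
  have hu_blk : u - 1 ∉ Ico j (j + a) := fun h => hu (mem_union_right _ h)
  rw [filter_union]
  refine (card_union_le _ _).trans ?_
  have hold := hright u hzu hu_occ
  rw [List.countP_cons]
  rcases lt_or_ge j u with hju | huj
  · have : (Ico j (j + a)).filter (u ≤ ·) = ∅ :=
      filter_eq_empty_iff.mpr fun x hx hux => hu_blk (by simp only [mem_Ico] at hx ⊢; omega)
    rw [this, card_empty, Nat.add_mul]
    omega
  · have huc : u ≤ c := by
      by_contra! hcu
      exact hu_occ (hbefore (u - 1) (by omega) (by omega))
    have : ((Ico j (j + a)).filter (u ≤ ·)).card ≤ a :=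
      (card_filter_le _ _).trans (Nat.card_Ico j (j + a)).le |>.trans (by omega)
    simp only [huc, decide_true, if_true, Nat.add_mul, one_mul]
    omega

theorem le_start (h : BlockInvariant z a occ done) (hfe : firstEmpty occ M c = some j)
    (hc : 1 ≤ c) : z ≤ j := by
  obtain ⟨hcj, -, hj, -⟩ := firstEmpty_eq_some_iff.mp hfe
  by_contra! hjz
  exact hj (h.1 (mem_Ico.mpr ⟨by omega, hjz⟩))

theorem start_le {s : ℕ} (h : BlockInvariant z a occ done) (hz : 0 < z)
    (hfe : firstEmpty occ M c = some j) (hlen : done.length < s)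
    (hcount : ∀ k < s, (c :: done).countP (z + k * a < ·) + k < s) :
    j + a ≤ z + s * a := by
  obtain ⟨htrailer, hcard, hright⟩ := h
  obtain ⟨-, -, -, hbefore⟩ := firstEmpty_eq_some_iff.mp hfe
  have hs : done.length * a + a ≤ s * a := by
    rw [← Nat.succ_mul]; exact Nat.mul_le_mul_right a hlen
  by_contra! hfar
  rcases Ico_subset_or_exists_notMem occ z j with hfull | ⟨u, hzu, huj, hu, hrun⟩
  · have : Ico 1 j ⊆ occ := fun x hx => by
      rcases lt_or_ge x z with hxz | hzx
      · exact htrailer (mem_Ico.mpr ⟨(mem_Ico.mp hx).1, hxz⟩)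
      · exact hfull (mem_Ico.mpr ⟨hzx, (mem_Ico.mp hx).2⟩)
    have := card_le_card this
    rw [Nat.card_Ico] at this
    omega
  · have huc : u ≤ c := by
      by_contra! hcu
      exact hu (hbefore (u - 1) (by omega) (by omega))
    set m := done.countP (u ≤ ·)
    have hm : m ≤ done.length := List.countP_le_length
    have hjm : j - u ≤ m * a := by
      have := card_le_card (fun x hx => mem_filter.mpr ⟨hrun hx, (mem_Ico.mp hx).1⟩ :
        Ico u j ⊆ occ.filter (u ≤ ·))
      rw [Nat.card_Ico] at this
      exact this.trans (hright u hzu hu)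
    -- the `m + 1` preferences `≥ u` all exceed `z + (s - 1 - m) a`
    have hsplit : (s - 1 - m) * a + m * a + a = s * a := by
      rw [← Nat.add_mul, ← Nat.succ_mul]; congr 1; omega
    have hku : z + (s - 1 - m) * a < u := by omega
    have hmore : m + 1 ≤ (c :: done).countP (z + (s - 1 - m) * a < ·) := by
      rw [List.countP_cons, if_pos (by simpa using hku.trans_le huc)]
      exact Nat.add_le_add_right (List.countP_mono_left fun x _ hx => by
        simp only [decide_eq_true_eq] at hx ⊢; omega) 1
    have := hcount (s - 1 - m) (by omega)
    omega

end BlockInvariant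

theorem parkAux_replicate_starts_mem_window {M z a s : ℕ} {cs : List ℕ} (hz : 0 < z)
    (hcount : ∀ k < s, cs.countP (z + k * a < ·) + k < s) :
    ∀ (k : ℕ) (done rest ys L : List ℕ) (occ : Finset ℕ),
      parkAux M occ rest (List.replicate k a ++ ys) = some L →
      BlockInvariant z a occ done → (done ++ rest).Perm cs → (∀ c ∈ rest, 1 ≤ c) →
      done.length + k = s → ∀ i < k, z ≤ L.getD i 0 ∧ L.getD i 0 + a ≤ z + s * a := by
  intro k
  induction k with
  | zero => intro _ _ _ _ _ _ _ _ _ _ i hi; omega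
  | succ k ih =>
    rintro done (_ | ⟨c, rest⟩) ys L occ hpark hinv hperm hpos hlen
    · simp [parkAux] at hpark
    obtain ⟨j, L', hfe, hfree, -, hpark', rfl⟩ := parkAux_cons_eq_some.mp hpark
    have hperm' : (c :: done ++ rest).Perm cs := List.perm_middle.symm.trans hperm
    have hsub : (c :: done).Subperm cs :=
      ((List.sublist_append_left _ rest).subperm).trans hperm'.subperm
    have hj := hinv.start_le hz hfe (by omega) fun k hk =>
      (Nat.add_le_add_right (hsub.countP_le _) k).trans_lt (hcount k hk)
    have htail := ih (c :: done) rest ys L' _ hpark' (hinv.park hfe hfree) hperm'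
      (fun x hx => hpos x (List.mem_cons_of_mem c hx)) (by rw [List.length_cons]; omega)
    rintro (_ | i) hi
    · exact ⟨hinv.le_start hfe (hpos c List.mem_cons_self), hj⟩
    · exact htail i (by omega)

def FrontierState (M u f : ℕ) (occ : Finset ℕ) : Prop :=
  f ≤ u ∧ u ∈ occ ∧ Ico 1 f ⊆ occ ∧ occ ⊆ Ico 1 f ∪ Ico u (M + 1)

namespace FrontierState

variable {M u f c j y : ℕ} {occ : Finset ℕ}

theorem park_right (h : FrontierState M u f occ) (huj : u ≤ j) (hfit : j + y - 1 ≤ M) :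
    FrontierState M u f (occ ∪ Ico j (j + y)) := by
  obtain ⟨hfu, hu, hlow, hsub⟩ := h
  refine ⟨hfu, mem_union_left _ hu, hlow.trans subset_union_left, union_subset hsub ?_⟩
  intro x hx
  simp only [mem_Ico] at hx
  exact mem_union_right _ (mem_Ico.mpr ⟨by omega, by omega⟩)

theorem park_front (h : FrontierState M u f occ) (hfe : firstEmpty occ M c = some j)
    (hc : 1 ≤ c) (hcf : c ≤ f) (hju : j < u) (hfree : ∀ i ∈ Ico j (j + y), i ∉ occ) :
    j = f ∧ FrontierState M u (f + y) (occ ∪ Ico j (j + y)) := by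
  obtain ⟨hfu, hu, hlow, hsub⟩ := h
  obtain ⟨hcj, -, hj, hbefore⟩ := firstEmpty_eq_some_iff.mp hfe
  have hfj : f ≤ j := by
    by_contra! hjf
    exact hj (hlow (mem_Ico.mpr ⟨by omega, hjf⟩))
  have hf : f ∉ occ := fun hf => by
    have := hsub hf
    simp only [mem_union, mem_Ico] at this
    omega
  obtain rfl : j = f := by
    by_contra! hjf
    exact hf (hbefore f hcf (by omega))
  have hju' : j + y ≤ u := by
    by_contra! huy
    exact hfree u (mem_Ico.mpr ⟨by omega, huy⟩) hu
  refine ⟨rfl, hju', mem_union_left _ hu, ?_, ?_⟩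
  · rw [← Ico_union_Ico_eq_Ico (by omega : 1 ≤ j) (Nat.le_add_right j y)]
    exact union_subset_union hlow subset_rfl
  · intro x hx
    have := (mem_union.mp hx).imp_left (@hsub x)
    simp only [mem_union, mem_Ico] at this ⊢
    omega

end FrontierState

theorem parkAux_frontier {M u b f₀ : ℕ} :
    ∀ (cs ys L : List ℕ) (occ : Finset ℕ) (f : ℕ), parkAux M occ cs ys = some L →
      (∀ p ∈ cs.zip ys, u ≤ p.1 ∨ (p.1 ∈ Icc 1 f₀ ∧ p.2 = b)) →
      f₀ ≤ f → f ≡ f₀ [MOD b] → FrontierState M u f occ →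
      ∃ f' occ', f' ≡ f₀ [MOD b] ∧ f₀ ≤ f' ∧ FrontierState M u f' occ' ∧
        occ'.card = occ.card + ys.sum := by
  intro cs
  induction cs with
  | nil =>
    rintro (_ | ⟨y, ys⟩) L occ f hpark - hf₀ hmod hstate
    · exact ⟨f, occ, hmod, hf₀, hstate, by simp⟩
    · simp [parkAux] at hpark
  | cons c cs ih =>
    rintro (_ | ⟨y, ys⟩) L occ f hpark hcars hf₀ hmod hstate
    · simp [parkAux] at hpark
    obtain ⟨j, L', hfe, hfree, hfit, hpark', -⟩ := parkAux_cons_eq_some.mp hpark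
    have hcars' : ∀ p ∈ cs.zip ys, u ≤ p.1 ∨ (p.1 ∈ Icc 1 f₀ ∧ p.2 = b) :=
      fun p hp => hcars p (List.mem_cons_of_mem _ hp)
    have hcount : (occ ∪ Ico j (j + y)).card + ys.sum = occ.card + (y :: ys).sum := by
      rw [card_union_Ico hfree, List.sum_cons, Nat.add_assoc]
    by_cases huj : u ≤ j
    · obtain ⟨f', occ', hmod', hf₀', hstate', hcard'⟩ :=
        ih ys L' _ f hpark' hcars' hf₀ hmod (hstate.park_right huj hfit)
      exact ⟨f', occ', hmod', hf₀', hstate', hcard'.trans hcount⟩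
    · obtain ⟨hc, rfl⟩ : c ∈ Icc 1 f₀ ∧ y = b := (hcars (c, y) List.mem_cons_self).resolve_left
        fun huc => huj (huc.trans (firstEmpty_eq_some_iff.mp hfe).1)
      rw [mem_Icc] at hc
      obtain ⟨rfl, hstate'⟩ :=
        hstate.park_front hfe hc.1 (hc.2.trans hf₀) (by omega) hfree
      have hmod' : j + y ≡ f₀ [MOD y] := (Nat.add_modEq_left_iff.mpr dvd_rfl).trans hmod
      obtain ⟨f', occ', hmod', hf₀', hstate', hcard'⟩ :=
        ih ys L' _ (j + y) hpark' hcars' (by omega) hmod' hstate'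
      exact ⟨f', occ', hmod', hf₀', hstate', hcard'.trans hcount⟩

theorem modEq_of_parkResult {ys cs : List ℕ} {u f b : ℕ} (hf : 0 < f) (hfu : f < u)
    (hys : ∀ y ∈ ys, 0 < y)
    (hcars : ∀ p ∈ cs.zip ys.tail, u ≤ p.1 ∨ (p.1 ∈ Icc 1 f ∧ p.2 = b))
    (h : (parkResult ys (u :: cs) f).isSome) : u ≡ f [MOD b] := by
  obtain ⟨L, hL⟩ := Option.isSome_iff_exists.mp h
  rcases ys with _ | ⟨y, ys⟩
  · simp [parkResult, parkAux] at hL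
  have hy := hys y List.mem_cons_self
  obtain ⟨j, L', hfe, hfree, hfit, hpark, -⟩ := parkAux_cons_eq_some.mp hL
  obtain ⟨huj, -, -, hbefore⟩ := firstEmpty_eq_some_iff.mp hfe
  obtain rfl : j = u := by
    by_contra! hju
    have := hbefore u le_rfl (by omega)
    simp only [mem_Ico] at this
    omega
  rw [List.sum_cons] at hfit hpark
  have hstate : FrontierState (f - 1 + (y + ys.sum)) j f (Ico 1 f ∪ Ico j (j + y)) :=
    ⟨hfu.le, mem_union_right _ (by simp [hy]), subset_union_left,
      union_subset_union subset_rfl (Ico_subset_Ico_right (by omega))⟩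
  obtain ⟨f', occ, hmod, hff', ⟨hf'u, -, -, hsub⟩, hcard⟩ :=
    parkAux_frontier cs ys L' _ f hpark hcars le_rfl rfl hstate
  -- every spot of the street is taken in the end, so the frontier has reached `j`
  have : occ.card ≤ (f' - 1) + (f - 1 + (y + ys.sum) + 1 - j) :=
    (card_le_card hsub).trans ((card_union_le _ _).trans (by simp))
  rw [hcard, card_union_Ico hfree, Nat.card_Ico] at this
  obtain rfl : f' = j := by omega
  exact hmod

theorem List.mem_zip_append_of_forall_mem_drop {α β : Type*} {l₁ l₂ : List α} {ys : List β}
    {b : β} (hb : ∀ y ∈ ys.drop l₁.length, y = b) {p : α × β}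
    (hp : p ∈ (l₁ ++ l₂).zip ys) : p.1 ∈ l₁ ∨ (p.1 ∈ l₂ ∧ p.2 = b) := by
  induction l₁ generalizing ys with
  | nil =>
    exact Or.inr ⟨List.of_mem_zip hp |>.1, hb _ (List.of_mem_zip hp).2⟩
  | cons x l₁ ih =>
    rcases ys with _ | ⟨y, ys⟩
    · simp at hp
    rcases List.mem_cons.mp hp with rfl | hp
    · exact Or.inl List.mem_cons_self
    · exact (ih (fun y hy => hb y (by simpa using hy)) hp).imp_left (List.mem_cons_of_mem x)

theorem List.eq_of_mem_drop_replicate_append {α : Type*} {a b y : α} {k s m : ℕ} (hkm : k ≤ m)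
    (hy : y ∈ (List.replicate k a ++ List.replicate s b).drop m) : y = b := by
  rw [List.drop_append, List.drop_replicate, Nat.sub_eq_zero_of_le hkm] at hy
  simp only [List.replicate_zero, List.nil_append, List.drop_replicate] at hy
  exact List.eq_of_mem_replicate hy

theorem not_permInvariant_of_perm {r s a b z u : ℕ} {cs bigs smalls : List ℕ} (ha : 0 < a)
    (hab : a < b) (hz : 0 < z) (hperm : (u :: (bigs ++ smalls)).Perm cs) (hzu : z < u)
    (hbigs : ∀ x ∈ bigs, u ≤ x) (hsmalls : ∀ x ∈ smalls, x ≤ z) (hr : r ≤ bigs.length) :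
    ¬ PermInvariant (a :: (List.replicate r a ++ List.replicate s b)) cs z := by
  intro h
  set T := List.replicate r a ++ List.replicate s b
  have hT : ∀ y ∈ a :: T, 0 < y := by
    simp only [T, List.mem_cons, List.mem_append, List.mem_replicate]
    omega
  have hpos : ∀ x ∈ cs, 1 ≤ x := (h cs (List.Perm.refl cs)).2.1
  have hcars : ∀ f, z ≤ f → ∀ l ⊆ smalls, ∀ ys : List ℕ, (∀ y ∈ ys.drop bigs.length, y = b) →
      ∀ p ∈ (bigs ++ l).zip ys, u ≤ p.1 ∨ (p.1 ∈ Icc 1 f ∧ p.2 = b) := by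
    intro f hzf l hl ys hys p hp
    refine (List.mem_zip_append_of_forall_mem_drop hys hp).imp (hbigs _) fun ⟨hpl, hpb⟩ => ?_
    have hp_cs : p.1 ∈ cs := hperm.subset (by simp [hl hpl])
    exact ⟨mem_Icc.mpr ⟨hpos _ hp_cs, (hsmalls _ (hl hpl)).trans hzf⟩, hpb⟩
  have hu : u ≡ z [MOD b] := modEq_of_parkResult hz hzu hT
    (hcars z le_rfl smalls (List.Subset.refl _) T fun _ => List.eq_of_mem_drop_replicate_append hr)
    (h _ hperm).2.2
  rcases smalls with _ | ⟨w, smalls⟩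
  · -- with no car preferring a spot `≤ z` the frontier cannot move: take `b = 0`
    have : u ≡ z [MOD 0] := modEq_of_parkResult hz hzu hT
      (fun p hp => Or.inl (hbigs _ (by simpa using (List.of_mem_zip hp).1))) (h _ hperm).2.2
    exact hzu.ne' (Nat.modEq_zero_iff.mp this)
  -- the car preferring `w ≤ z` moves to the front, parks at `z` and shifts the frontier by `a`
  have hw : w ∈ cs := hperm.subset (by simp)
  have hwz : w ≤ z := hsmalls w List.mem_cons_self
  have hperm' : (w :: u :: (bigs ++ smalls)).Perm cs :=
    ((List.Perm.swap u w _).trans (List.perm_middle.cons u).symm).trans hperm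
  have hparks := (h _ hperm').2.2
  rw [parkResult_cons_of_le ha (hpos w hw) hwz, Option.isSome_map] at hparks
  have hbu : z + b ≤ u := by
    have := (Nat.modEq_iff_dvd' hzu.le).mp hu.symm
    have := Nat.le_of_dvd (by omega) this
    omega
  have hu' : u ≡ z + a [MOD b] := modEq_of_parkResult (by omega) (by omega)
    (fun y hy => hT y (List.mem_cons_of_mem a hy))
    (hcars (z + a) le_self_add smalls (List.subset_cons_self w smalls) T.tail
      fun y hy => List.eq_of_mem_drop_replicate_append (m := bigs.length + 1) (by omega)
        (List.drop_tail ▸ hy))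
    hparks
  have ha0 : a ≡ 0 [MOD b] := Nat.ModEq.add_left_cancel' z (hu'.symm.trans hu)
  rw [Nat.ModEq, Nat.mod_eq_of_lt hab, Nat.zero_mod] at ha0
  omega

theorem countP_lt_of_permInvariant {r s a b z : ℕ} {cs : List ℕ} (hr : 0 < r) (ha : 0 < a)
    (hab : a < b) (hz : 0 < z)
    (h : PermInvariant (List.replicate r a ++ List.replicate s b) cs z) :
    cs.countP (z < ·) < r := by
  obtain ⟨r, rfl⟩ : ∃ r', r = r' + 1 := ⟨r - 1, by omega⟩
  by_contra! hbig
  have hex : ∃ u, u ∈ cs ∧ z < u := by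
    simpa using List.countP_pos_iff.mp (by omega : 0 < cs.countP (z < ·))
  classical
  set u := Nat.find hex
  obtain ⟨hu, hzu⟩ : u ∈ cs ∧ z < u := Nat.find_spec hex
  have hu_big : u ∈ cs.filter (z < ·) := List.mem_filter.mpr ⟨hu, decide_eq_true hzu⟩
  have hperm := ((List.perm_cons_erase hu_big).symm.append_right
    (cs.filter fun x => !decide (z < x))).trans (List.filter_append_perm (z < ·) cs)
  refine not_permInvariant_of_perm ha hab hz hperm hzu
    (fun x hx => Nat.find_min' hex (by simpa using List.mem_of_mem_erase hx))
    (fun x hx => by simpa using (List.mem_filter.mp hx).2) ?_ h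
  rw [List.length_erase_of_mem hu_big, ← List.countP_eq_length_filter]
  omega

theorem PermInvariant.erase {ys cs : List ℕ} {a w z : ℕ} (h : PermInvariant (a :: ys) cs z)
    (ha : 0 < a) (hw : w ∈ cs) (hwz : w ≤ z) : PermInvariant ys (cs.erase w) (z + a) := by
  intro σ hσ
  obtain ⟨hlen, hpos, hparks⟩ := h (w :: σ) ((hσ.cons w).trans (List.perm_cons_erase hw).symm)
  rw [parkResult_cons_of_le ha (hpos w List.mem_cons_self) hwz, Option.isSome_map] at hparks
  exact ⟨by simpa using hlen, fun c hc => hpos c (List.mem_cons_of_mem w hc), hparks⟩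

theorem countP_add_lt_of_permInvariant {s a b : ℕ} (ha : 0 < a) (hab : a < b) :
    ∀ (k r z : ℕ) (cs : List ℕ), 0 < z →
      PermInvariant (List.replicate r a ++ List.replicate s b) cs z → k < r →
      cs.countP (z + k * a < ·) + k < r
  | 0, r, z, cs, hz, h, hr => by simpa using countP_lt_of_permInvariant hr ha hab hz h
  | k + 1, r, z, cs, hz, h, hr => by
    obtain ⟨r, rfl⟩ : ∃ r', r = r' + 1 := ⟨r - 1, by omega⟩
    obtain ⟨w, hw, hwz⟩ : ∃ w ∈ cs, w ≤ z := by
      have hlt := countP_lt_of_permInvariant (Nat.succ_pos r) ha hab hz h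
      have hlen : cs.length = r + 1 + s := by simpa using (h cs (List.Perm.refl cs)).1
      by_contra! hall
      rw [List.countP_eq_length.mpr (by simpa using hall)] at hlt
      omega
    have ih := countP_add_lt_of_permInvariant ha hab k r (z + a) (cs.erase w) (by omega)
      (h.erase ha hw hwz) (by omega)
    rw [(List.perm_cons_erase hw).countP_eq, List.countP_cons,
      if_neg (by simp only [decide_eq_true_eq, not_lt]; nlinarith),
      show z + (k + 1) * a = z + a + k * a by ring]
    omega

theorem stmt11_general (n r a b z : ℕ)
    (ha : 0 < a) (hab : a < b) (hz : 0 < z) (cs : List ℕ)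
    (hperm : PermInvariant (List.replicate r a ++ List.replicate (n - r) b) cs z) :
    ∃ starts : List ℕ,
      parkResult (List.replicate r a ++ List.replicate (n - r) b) cs z = some starts ∧
      ∀ i < r, z ≤ starts.getD i 0 ∧ starts.getD i 0 + a ≤ z + r * a := by
  obtain ⟨-, hpos, hparks⟩ := hperm cs (List.Perm.refl cs)
  obtain ⟨starts, hstarts⟩ := Option.isSome_iff_exists.mp hparks
  exact ⟨starts, hstarts, parkAux_replicate_starts_mem_window hz
    (fun k hk => countP_add_lt_of_permInvariant ha hab k r z cs hz hperm hk)
    r [] cs _ starts _ hstarts (BlockInvariant.init z a) (List.Perm.refl cs) hpos (by simp)⟩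

theorem stmt11 (n r a b z : ℕ) (hn : 2 ≤ n) (hr1 : 1 ≤ r) (hrn : r < n)
    (ha : 0 < a) (hab : a < b) (hz : 0 < z) (cs : List ℕ)
    (hperm : PermInvariant (List.replicate r a ++ List.replicate (n - r) b) cs z) :
    ∃ starts : List ℕ,
      parkResult (List.replicate r a ++ List.replicate (n - r) b) cs z = some starts ∧
      ∀ i < r, z ≤ starts.getD i 0 ∧ starts.getD i 0 + a ≤ z + r * a :=
  stmt11_general n r a b z ha hab hz cs hperm
end

section
/- Let z, a ∈ Z_+ with a > 1, n ≥ 1, and y = (a, 1, 1, ..., 1) ∈ (Z_+)^n. Then the set of permutation-invariant parking sequences for (y;z) equals the set of u-parking functions of length n for u = (z, z+1, ..., z+n-1), i.e., the sequences c whose order statistics satisfy c_{(i)} ≤ z+i-1 for all i. Consequently its cardinality is z(n+z)^{n-1}. -/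
open Finset

/-!
Both sets are cut out by the tail bound: for every `s ≤ n + z`, at most `n + z - s` preferences
are `≥ s`. For the parking side, sending a car with preference `≥ s` in first as the long car
shows the bound is necessary, and under the bound the unit cars always find a free spot wherever
the long car went (a count of free spots to the right of each `s`). For order statistics the
tail bound is the `u`-parking condition read from the other end.

The count is Pollak's cycle argument. Coding preferences by `g : Fin n → ZMod (n + z)`, the
translates `g + k` satisfying the bound correspond to the strict prefix minima, within one period,
of the walk `x ↦ (∑ i < x, #{t | g t = i}) - x`, which loses exactly `z` per period and at most
one per step; so there are exactly `z` of them, and double counting gives `z (n + z) ^ (n - 1)`.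
-/

def freeSpotsFrom (M : ℕ) (occ : Finset ℕ) (s : ℕ) : ℕ := #{x ∈ Ico s (M + 1) | x ∉ occ}

theorem exists_firstEmpty_eq_some {occ : Finset ℕ} {M c x : ℕ} (hcx : c ≤ x) (hxM : x ≤ M)
    (hx : x ∉ occ) : ∃ j, firstEmpty occ M c = some j := by
  rw [← Option.isSome_iff_exists, firstEmpty, List.find?_isSome]
  exact ⟨x, List.mem_range'_1.mpr (by omega), by simpa using hx⟩

section freeSpotsFrom

variable {M : ℕ} {occ : Finset ℕ}

theorem freeSpotsFrom_anti {occ' : Finset ℕ} (h : occ ⊆ occ') (s : ℕ) :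
    freeSpotsFrom M occ' s ≤ freeSpotsFrom M occ s :=
  card_le_card (monotone_filter_right _ fun _ _ hx hmem => hx (h hmem))

theorem freeSpotsFrom_le (s : ℕ) : freeSpotsFrom M occ s ≤ M + 1 - s :=
  (card_filter_le _ _).trans (Nat.card_Ico _ _).le

theorem freeSpotsFrom_union_Ico_add {j y s : ℕ} (hfree : ∀ i ∈ Ico j (j + y), i ∉ occ)
    (hjM : j + y ≤ M + 1) (hs : s ≤ j) :
    freeSpotsFrom M (occ ∪ Ico j (j + y)) s + y = freeSpotsFrom M occ s := by
  have hcar : {x ∈ Ico s (M + 1) | x ∉ occ ∧ ¬x ∉ Ico j (j + y)} = Ico j (j + y) := by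
    ext x
    simp only [mem_filter, mem_Ico, not_not]
    exact ⟨fun h => h.2.2, fun h => ⟨by omega, hfree x (mem_Ico.mpr h), h⟩⟩
  have hsplit := card_filter_add_card_filter_not (s := {x ∈ Ico s (M + 1) | x ∉ occ})
    (fun x => x ∉ Ico j (j + y))
  rw [filter_filter, filter_filter, hcar, Nat.card_Ico, Nat.add_sub_cancel_left] at hsplit
  rw [freeSpotsFrom, freeSpotsFrom, ← hsplit]
  simp only [mem_union, not_or]

theorem freeSpotsFrom_union_Ico_of_le {j y s : ℕ} (h : j + y ≤ s) :
    freeSpotsFrom M (occ ∪ Ico j (j + y)) s = freeSpotsFrom M occ s := by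
  refine congrArg card (filter_congr fun x hx => ?_)
  simp only [mem_Ico] at hx
  simp only [mem_union, mem_Ico, not_or, and_iff_left_iff_imp]
  omega

theorem freeSpotsFrom_eq_of_forall_mem {c s : ℕ} (hcs : c ≤ s)
    (h : ∀ i, c ≤ i → i < s → i ∈ occ) : freeSpotsFrom M occ c = freeSpotsFrom M occ s := by
  refine congrArg card (ext fun x => ?_)
  simp only [mem_filter, mem_Ico]
  constructor
  · rintro ⟨⟨hcx, hxM⟩, hx⟩
    exact ⟨⟨not_lt.mp fun hxs => hx (h x hcx hxs), hxM⟩, hx⟩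
  · rintro ⟨⟨hsx, hxM⟩, hx⟩
    exact ⟨⟨hcs.trans hsx, hxM⟩, hx⟩

end freeSpotsFrom

theorem parkAux_demand_le {M : ℕ} (s : ℕ) : ∀ {cs ys : List ℕ} {occ : Finset ℕ} {js : List ℕ},
    parkAux M occ cs ys = some js →
      (List.zipWith (fun c y => if s ≤ c then y else 0) cs ys).sum ≤ freeSpotsFrom M occ s
  | [], [], _, _, _ => by simp
  | [], _ :: _, _, _, h => by simp [parkAux] at h
  | _ :: _, [], _, _, h => by simp [parkAux] at h
  | c :: cs, y :: ys, occ, js, h => by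
    obtain ⟨j, hj⟩ : ∃ j, firstEmpty occ M c = some j := by
      cases hj : firstEmpty occ M c <;> simp_all [parkAux]
    obtain ⟨hcj, hjM, -, -⟩ := firstEmpty_eq_some_iff.mp hj
    rw [parkAux, hj] at h
    dsimp only at h
    split_ifs at h with hfit
    obtain ⟨js', hrest, -⟩ := Option.map_eq_some_iff.mp h
    have ih := parkAux_demand_le s hrest
    rw [List.zipWith_cons_cons, List.sum_cons]
    split_ifs with hsc
    · have := freeSpotsFrom_union_Ico_add (M := M) (s := s) hfit.1 (by omega) (hsc.trans hcj)
      omega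
    · simpa using ih.trans (freeSpotsFrom_anti subset_union_left s)

theorem parkAux_replicate_one_isSome {M : ℕ} : ∀ {cs : List ℕ} {occ : Finset ℕ},
    (∀ c ∈ cs, 1 ≤ c) → (∀ s, 1 ≤ s → cs.countP (s ≤ ·) ≤ freeSpotsFrom M occ s) →
      (parkAux M occ cs (List.replicate cs.length 1)).isSome
  | [], _, _, _ => rfl
  | c :: cs, occ, hpos, hroom => by
    have hc : 1 ≤ c := hpos c List.mem_cons_self
    have hroom_c := hroom c hc
    rw [List.countP_cons, if_pos (by simp)] at hroom_c
    obtain ⟨x, hx⟩ := card_pos.mp (show 0 < freeSpotsFrom M occ c by omega)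
    simp only [mem_filter, mem_Ico] at hx
    obtain ⟨j, hj⟩ := exists_firstEmpty_eq_some (M := M) hx.1.1 (by omega) hx.2
    obtain ⟨hcj, hjM, hjfree, hbefore⟩ := firstEmpty_eq_some_iff.mp hj
    have hfit : (∀ i ∈ Ico j (j + 1), i ∉ occ) ∧ j + 1 - 1 ≤ M :=
      ⟨fun i hi => by rw [Nat.Ico_succ_singleton, mem_singleton] at hi; rwa [hi], by omega⟩
    rw [List.length_cons, List.replicate_succ, parkAux, hj]
    simp only [if_pos hfit, Option.isSome_map]
    refine parkAux_replicate_one_isSome (fun c' hc' => hpos c' (List.mem_cons_of_mem _ hc'))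
      fun s hs => ?_
    have hroom_s := hroom s hs
    rw [List.countP_cons] at hroom_s
    rcases le_or_gt s j with hsj | hjs
    · have hsplit := freeSpotsFrom_union_Ico_add (M := M) hfit.1 (by omega) hsj
      by_cases hsc : s ≤ c
      · simp only [hsc, decide_true, if_true] at hroom_s
        omega
      · -- the spots `c, …, j - 1` are taken, so there is as much room from `c` as from `s`
        have hmono : cs.countP (s ≤ ·) ≤ cs.countP (c ≤ ·) :=
          List.countP_mono_left fun x _ hx => by simp at hx ⊢; omega
        have hcs := freeSpotsFrom_eq_of_forall_mem (M := M) (s := s) (by omega)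
          fun i hci his => hbefore i hci (by omega)
        omega
    · rw [freeSpotsFrom_union_Ico_of_le hjs]
      omega

theorem zipWith_replicate_one_sum (s : ℕ) : ∀ l : List ℕ,
    (List.zipWith (fun c y => if s ≤ c then y else 0) l (List.replicate l.length 1)).sum =
      l.countP (s ≤ ·)
  | [] => rfl
  | c :: l => by
    rw [List.length_cons, List.replicate_succ, List.zipWith_cons_cons, List.sum_cons,
      zipWith_replicate_one_sum s l, List.countP_cons]
    by_cases h : s ≤ c <;> simp [h, add_comm]

def IsTailBounded (n z : ℕ) (cs : List ℕ) : Prop :=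
  cs.length = n ∧ (∀ c ∈ cs, 1 ≤ c) ∧ ∀ s ≤ n + z, cs.countP (s ≤ ·) + s ≤ n + z

theorem IsTailBounded.perm {n z : ℕ} {cs cs' : List ℕ} (h : IsTailBounded n z cs)
    (hp : cs'.Perm cs) : IsTailBounded n z cs' :=
  ⟨hp.length_eq.trans h.1, fun c hc => h.2.1 c (hp.subset hc),
    fun s hs => hp.countP_eq _ ▸ h.2.2 s hs⟩

theorem IsTailBounded.lt {n z : ℕ} {cs : List ℕ} (h : IsTailBounded n z cs) :
    ∀ c ∈ cs, c < n + z := by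
  have h0 : cs.countP (n + z ≤ ·) = 0 := by have := h.2.2 (n + z) le_rfl; omega
  intro c hc
  simpa using List.countP_eq_zero.mp h0 c hc

theorem freeSpotsFrom_trailer_union_Ico {M z j a s : ℕ} (hzj : z ≤ j) (hjM : j ≤ M + 1)
    (hs : 1 ≤ s) :
    freeSpotsFrom M (Ico 1 z ∪ Ico j (j + a)) s = (j - max s z) + (M + 1 - max s (j + a)) := by
  have hspots : {x ∈ Ico s (M + 1) | x ∉ Ico 1 z ∪ Ico j (j + a)} =
      Ico (max s z) j ∪ Ico (max s (j + a)) (M + 1) := by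
    ext x
    simp only [mem_filter, mem_Ico, mem_union, not_or, not_and, not_lt]
    omega
  rw [freeSpotsFrom, hspots, card_union_of_disjoint, Nat.card_Ico, Nat.card_Ico]
  exact disjoint_left.mpr fun x hx hx' => by simp only [mem_Ico] at hx hx'; omega

theorem IsTailBounded.countP_tail_le {n a z c₁ s : ℕ} {rest : List ℕ} (ha : 0 < a)
    (h : IsTailBounded n z (c₁ :: rest)) (hs : 1 ≤ s) :
    rest.countP (s ≤ ·) ≤
      (max c₁ z - max s z) + (z - 1 + (a + (n - 1)) + 1 - max s (max c₁ z + a)) := by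
  have hlt := h.lt
  obtain ⟨hlen, -, htail⟩ := h
  have hc₁ : c₁ < n + z := hlt c₁ List.mem_cons_self
  have hcount (t : ℕ) :
      (c₁ :: rest).countP (t ≤ ·) = rest.countP (t ≤ ·) + if t ≤ c₁ then 1 else 0 := by
    simp [List.countP_cons]
  have hrest : rest.length + 1 = n := by simpa using hlen
  have hle_len : rest.countP (s ≤ ·) ≤ rest.length := List.countP_le_length
  rcases le_or_gt s (max c₁ z) with hsj | hjs
  · have := htail s (by omega)
    have := hcount s
    split_ifs at this <;> omega
  by_cases hsa : s < max c₁ z + a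
  · -- the room left is beyond the long car, and the tail bound at `max c₁ z + 1` pays for it
    have hmono : rest.countP (s ≤ ·) ≤ rest.countP (max c₁ z + 1 ≤ ·) :=
      List.countP_mono_left fun x _ hx => by simp at hx ⊢; omega
    have := htail (max c₁ z + 1) (by omega)
    have := hcount (max c₁ z + 1)
    split_ifs at this <;> omega
  by_cases hsN : s ≤ n + z
  · have := htail s hsN
    have := hcount s
    split_ifs at this <;> omega
  · have : rest.countP (s ≤ ·) = 0 := List.countP_eq_zero.mpr fun x hx => by
      have := hlt x (List.mem_cons_of_mem _ hx)
      simp only [decide_eq_true_eq]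
      omega
    omega

theorem IsTailBounded.isParkingSeq {n a z : ℕ} {cs : List ℕ} (hn : 1 ≤ n) (ha : 0 < a)
    (hz : 0 < z) (h : IsTailBounded n z cs) :
    IsParkingSeq (a :: List.replicate (n - 1) 1) cs z := by
  obtain _ | ⟨c₁, rest⟩ := cs
  · have := h.1
    simp at this
    omega
  have hc₁ : c₁ < n + z := h.lt c₁ List.mem_cons_self
  have hc₁pos : 1 ≤ c₁ := h.2.1 c₁ List.mem_cons_self
  have hrest : rest.length = n - 1 := by have := h.1; simp at this; omega
  refine ⟨by simp [hrest], h.2.1, ?_⟩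
  simp only [parkResult, List.sum_cons, List.sum_replicate, smul_eq_mul, mul_one]
  have hj : firstEmpty (Ico 1 z) (z - 1 + (a + (n - 1))) c₁ = some (max c₁ z) :=
    firstEmpty_eq_some_iff.mpr ⟨le_max_left _ _, by omega, by simp only [mem_Ico]; omega,
      fun i hi hij => by simp only [mem_Ico]; omega⟩
  have hfit : (∀ i ∈ Ico (max c₁ z) (max c₁ z + a), i ∉ Ico 1 z) ∧
      max c₁ z + a - 1 ≤ z - 1 + (a + (n - 1)) :=
    ⟨fun i hi => by simp only [mem_Ico] at hi ⊢; omega, by omega⟩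
  rw [parkAux, hj]
  simp only [if_pos hfit, Option.isSome_map]
  generalize hM : z - 1 + (a + (n - 1)) = M at hfit ⊢
  rw [← hrest]
  refine parkAux_replicate_one_isSome (fun c hc => h.2.1 c (List.mem_cons_of_mem _ hc))
    fun s hs => ?_
  rw [freeSpotsFrom_trailer_union_Ico (le_max_right _ _) (by omega) hs, ← hM]
  exact h.countP_tail_le ha hs

theorem IsTailBounded.of_permInvariant {n a z : ℕ} {cs : List ℕ} (hn : 1 ≤ n) (ha : 0 < a)
    (hz : 0 < z) (h : PermInvariant (a :: List.replicate (n - 1) 1) cs z) :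
    IsTailBounded n z cs := by
  obtain ⟨hlen, hpos, -⟩ := h cs (List.Perm.refl cs)
  simp only [List.length_cons, List.length_replicate] at hlen
  refine ⟨by omega, hpos, fun s _ => ?_⟩
  by_contra hover
  obtain ⟨c, hc, hsc⟩ := List.countP_pos_iff.mp (show 0 < cs.countP (s ≤ ·) by omega)
  have hperm := List.perm_cons_erase hc
  obtain ⟨-, -, hpark⟩ := h _ hperm.symm
  obtain ⟨js, hjs⟩ := Option.isSome_iff_exists.mp hpark
  have hdemand := parkAux_demand_le s hjs
  have herase : (cs.erase c).length = n - 1 := by rw [List.length_erase_of_mem hc]; omega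
  have hunit := zipWith_replicate_one_sum s (cs.erase c)
  rw [herase] at hunit
  rw [List.zipWith_cons_cons, List.sum_cons, hunit, if_pos (by simpa using hsc)] at hdemand
  have hroom := (freeSpotsFrom_le (M := z - 1 + (a :: List.replicate (n - 1) 1).sum)
    (occ := Ico 1 z) s)
  have hcount := hperm.countP_eq (s ≤ ·)
  have hsum : (a :: List.replicate (n - 1) 1).sum = a + (n - 1) := by simp
  simp only [List.countP_cons, hsc, if_true] at hcount
  omega

theorem permInvariant_iff_isTailBounded {n a z : ℕ} {cs : List ℕ} (hn : 1 ≤ n) (ha : 0 < a)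
    (hz : 0 < z) : PermInvariant (a :: List.replicate (n - 1) 1) cs z ↔ IsTailBounded n z cs :=
  ⟨IsTailBounded.of_permInvariant hn ha hz,
    fun h _ hp => (h.perm hp).isParkingSeq hn ha hz⟩

theorem List.Pairwise.getElem_lt_iff_lt_countP {l : List ℕ} (hl : l.Pairwise (· ≤ ·)) (s : ℕ)
    {i : ℕ} (hi : i < l.length) : l[i] < s ↔ i < l.countP (· < s) := by
  induction l generalizing i with
  | nil => simp at hi
  | cons x l ih =>
    rw [List.pairwise_cons] at hl
    by_cases hx : x < s
    · rw [List.countP_cons, if_pos (by simpa using hx)]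
      cases i with
      | zero => simpa using hx
      | succ i => simpa using ih hl.2 (by simpa using hi)
    · have hbig : ∀ y ∈ x :: l, s ≤ y := fun y hy => by
        rcases List.mem_cons.mp hy with rfl | hy
        · omega
        · have := hl.1 y hy; omega
      rw [List.countP_eq_zero.mpr fun y hy => by simpa using hbig y hy]
      simpa using hbig _ (List.getElem_mem hi)

theorem List.countP_lt_add_countP_le (l : List ℕ) (s : ℕ) :
    l.countP (· < s) + l.countP (s ≤ ·) = l.length := by
  rw [List.length_eq_countP_add_countP (· < s)]
  congr 1
  exact List.countP_congr fun x _ => by simp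

theorem getD_map_range_add {n z i : ℕ} (hi : i < n) :
    ((List.range n).map (fun i => z + i)).getD i 0 = z + i := by
  simp [hi]

theorem isUPF_iff_isTailBounded {n z : ℕ} {cs : List ℕ} :
    IsUPF ((List.range n).map (fun i => z + i)) cs ↔ IsTailBounded n z cs := by
  have hsort : (orderStats cs).Pairwise (· ≤ ·) := Multiset.pairwise_sort _ _
  have hperm : (orderStats cs).Perm cs := Multiset.coe_eq_coe.mp (Multiset.sort_eq _ _)
  have hsplit (s : ℕ) : (orderStats cs).countP (· < s) + cs.countP (s ≤ ·) = cs.length := by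
    rw [← hperm.countP_eq, ← hperm.length_eq, List.countP_lt_add_countP_le]
  simp only [IsUPF, IsTailBounded, List.length_map, List.length_range]
  refine and_congr_right fun hlen => and_congr_right fun _ => ⟨fun h s hs => ?_, fun h i hi => ?_⟩
  · have := hsplit s
    by_cases hsz : s ≤ z
    · omega
    have hi : s - z - 1 < (orderStats cs).length := by rw [hperm.length_eq]; omega
    have hstat := h (s - z - 1) (by omega)
    rw [List.getD_eq_getElem _ _ hi, getD_map_range_add (by omega)] at hstat
    have := (hsort.getElem_lt_iff_lt_countP s hi).mp (by omega)
    omega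
  · have hi' : i < (orderStats cs).length := by rw [hperm.length_eq]; omega
    have := hsplit (z + i + 1)
    have := h (z + i + 1) (by omega)
    have := (hsort.getElem_lt_iff_lt_countP (z + i + 1) hi').mpr (by omega)
    rw [List.getD_eq_getElem _ _ hi', getD_map_range_add hi]
    omega

/-- As `f` drops by at most one per step, each new strict prefix minimum lies exactly one below
the previous minimum. -/
theorem card_strictPrefixMin_Ico (f : ℕ → ℤ) (hf : ∀ x, f x - 1 ≤ f (x + 1)) {a b : ℕ}
    (ha : 0 < a) (hab : a ≤ b) :
    (#{q ∈ Ico a b | ∀ y < q, f q < f y} : ℤ) =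
      (range a).inf' (nonempty_range_iff.mpr ha.ne') f -
        (range b).inf' (nonempty_range_iff.mpr (ha.trans_le hab).ne') f := by
  induction b, hab using Nat.le_induction with
  | base => simp
  | succ b hab ih =>
    have hb : 0 < b := ha.trans_le hab
    have hrange := nonempty_range_iff.mpr hb.ne'
    have hrecord : (∀ y < b, f b < f y) ↔ f b < (range b).inf' hrange f := by
      simp [lt_inf'_iff]
    have hstep : (range b).inf' hrange f - 1 ≤ f b := by
      have := inf'_le f (mem_range.mpr (Nat.sub_lt hb one_pos))
      have := hf (b - 1)
      rw [Nat.sub_add_cancel hb] at this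
      omega
    have hinf : (range (b + 1)).inf' (nonempty_range_iff.mpr (Nat.succ_ne_zero b)) f =
        min (f b) ((range b).inf' hrange f) := by
      simp only [range_add_one]
      exact inf'_insert hrange f
    simp only [Nat.Ico_succ_right_eq_insert_Ico hab, filter_insert, hinf]
    split_ifs with hb_rec
    · rw [card_insert_of_notMem (by simp), Nat.cast_succ, ih,
        min_eq_left ((hrecord.mp hb_rec).le)]
      have := hrecord.mp hb_rec
      omega
    · rw [ih, min_eq_right (not_lt.mp (hrecord.not.mp hb_rec))]

section CycleLemma

variable {D : ℕ → ℕ} {N z : ℕ}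

def walk (D : ℕ → ℕ) (x : ℕ) : ℤ := ((∑ i ∈ range x, D i : ℕ) : ℤ) - x

theorem walk_sub_one_le_walk_succ (x : ℕ) : walk D x - 1 ≤ walk D (x + 1) := by
  simp only [walk, sum_range_succ]
  push_cast
  omega

theorem walk_add_period (hD : ∀ i, D (i + N) = D i) (hsum : ∑ i ∈ range N, D i + z = N)
    (x : ℕ) : walk D (x + N) = walk D x - z := by
  have hshift : ∀ x, ∑ i ∈ range (x + N), D i = ∑ i ∈ range x, D i + ∑ i ∈ range N, D i := by
    intro x
    induction x with
    | zero => simp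
    | succ x ih => rw [Nat.add_right_comm, sum_range_succ, ih, hD, sum_range_succ]; ring
  simp only [walk, hshift]
  omega

theorem inf'_range_two_mul_walk (hD : ∀ i, D (i + N) = D i)
    (hsum : ∑ i ∈ range N, D i + z = N) (hN : 0 < N) :
    (range (2 * N)).inf' (nonempty_range_iff.mpr (by omega)) (walk D) =
      (range N).inf' (nonempty_range_iff.mpr hN.ne') (walk D) - z := by
  obtain ⟨x, hx, hmin⟩ := exists_mem_eq_inf' (nonempty_range_iff.mpr hN.ne') (walk D)
  refine le_antisymm ?_ (le_inf' _ _ fun y hy => ?_)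
  · rw [hmin, ← walk_add_period hD hsum]
    exact inf'_le _ (by simp at hx ⊢; omega)
  · simp only [mem_range] at hy
    rcases lt_or_ge y N with hyN | hyN
    · have := inf'_le (walk D) (mem_range.mpr hyN)
      omega
    · have := inf'_le (walk D) (mem_range.mpr (show y - N < N by omega))
      have hper := walk_add_period hD hsum (y - N)
      rw [Nat.sub_add_cancel hyN] at hper
      omega

def IsGoodShift (D : ℕ → ℕ) (N z p : ℕ) : Prop := ∀ m < N, m < ∑ i ∈ range m, D (p + i) + z

instance : DecidablePred (IsGoodShift D N z) := fun p => by
  unfold IsGoodShift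
  infer_instance

theorem isGoodShift_iff (hD : ∀ i, D (i + N) = D i) (hsum : ∑ i ∈ range N, D i + z = N)
    {p : ℕ} (hp : p < N) : IsGoodShift D N z p ↔ ∀ y < p + N, walk D (p + N) < walk D y := by
  have hwalk : ∀ m, ∑ i ∈ range m, D (p + i) = ∑ i ∈ range (p + m), D i - ∑ i ∈ range p, D i :=
    fun m => by rw [sum_range_add, Nat.add_sub_cancel_left]
  have hmono : ∀ m, ∑ i ∈ range p, D i ≤ ∑ i ∈ range (p + m), D i :=
    fun m => by rw [sum_range_add]; omega
  have hgood : ∀ m, m < ∑ i ∈ range m, D (p + i) + z ↔ walk D (p + N) < walk D (p + m) := by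
    intro m
    have := hmono m
    rw [walk_add_period hD hsum, hwalk]
    simp only [walk]
    omega
  constructor
  · intro h y hy
    rcases le_or_gt p y with hpy | hyp
    · obtain ⟨m, rfl⟩ := Nat.exists_eq_add_of_le hpy
      exact (hgood m).mp (h m (by omega))
    · obtain ⟨m, hm⟩ := Nat.exists_eq_add_of_le (show p ≤ y + N by omega)
      have := (hgood m).mp (h m (by omega))
      rw [← hm, walk_add_period hD hsum y] at this
      omega
  · exact fun h m hm => (hgood m).mpr (h _ (by omega))

theorem card_isGoodShift (hD : ∀ i, D (i + N) = D i) (hsum : ∑ i ∈ range N, D i + z = N)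
    (hN : 0 < N) : #{p ∈ range N | IsGoodShift D N z p} = z := by
  have hrecords := card_strictPrefixMin_Ico (walk D) walk_sub_one_le_walk_succ hN
    (show N ≤ 2 * N by omega)
  rw [inf'_range_two_mul_walk hD hsum hN, sub_sub_cancel, Nat.cast_inj] at hrecords
  refine Eq.trans ?_ hrecords
  refine card_nbij' (· + N) (· - N) (fun p hp => ?_) (fun q hq => ?_) (fun p _ => by simp)
    (fun q hq => ?_)
  · simp only [coe_filter, mem_range, Set.mem_ofPred_eq, mem_Ico] at hp ⊢
    rw [isGoodShift_iff hD hsum hp.1] at hp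
    exact ⟨⟨by omega, by omega⟩, fun y hy => hp.2 y (by omega)⟩
  · simp only [coe_filter, mem_range, Set.mem_ofPred_eq, mem_Ico] at hq ⊢
    refine ⟨by omega, (isGoodShift_iff hD hsum (by omega)).mpr fun y hy => ?_⟩
    rw [Nat.sub_add_cancel hq.1.1] at hy ⊢
    exact hq.2 y hy
  · simp only [coe_filter, mem_Ico, Set.mem_ofPred_eq] at hq
    exact Nat.sub_add_cancel hq.1.1

end CycleLemma

section ParkingCode

variable {n z : ℕ}

/-- The tail bound for the preferences `(g t).val + 1`, stated through lower counts. -/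
def IsParkingCode (z : ℕ) {N : ℕ} (g : Fin n → ZMod N) : Prop :=
  ∀ m < N, m < #{t | (g t).val < m} + z

instance {N : ℕ} : DecidablePred (IsParkingCode (n := n) z (N := N)) := fun g => by
  unfold IsParkingCode
  infer_instance

theorem card_val_lt_eq_sum {N : ℕ} [NeZero N] (g : Fin n → ZMod N) {m : ℕ} (hm : m ≤ N) :
    #{t | (g t).val < m} = ∑ i ∈ range m, #{t | g t = i} := by
  rw [card_eq_sum_card_fiberwise (f := fun t => (g t).val) (t := range m)
    fun t ht => by simpa using ht]
  refine sum_congr rfl fun i hi => congrArg card (ext fun t => ?_)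
  simp only [mem_filter, mem_univ, true_and, mem_range] at hi ⊢
  constructor
  · rintro ⟨-, rfl⟩
    exact (ZMod.natCast_zmod_val _).symm
  · intro h
    rw [h, ZMod.val_natCast_of_lt (hi.trans_le hm)]
    exact ⟨hi, rfl⟩

theorem isParkingCode_add_iff [NeZero (n + z)] (g : Fin n → ZMod (n + z)) (k : ZMod (n + z)) :
    IsParkingCode z (fun t => g t + k) ↔
      IsGoodShift (fun i => #{t | g t = i}) (n + z) z (-k).val := by
  refine forall₂_congr fun m hm => ?_
  rw [card_val_lt_eq_sum _ hm.le]
  refine Iff.of_eq (congrArg (m < · + z) (sum_congr rfl fun i _ => ?_))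
  congr 1
  ext t
  simp only [mem_filter, mem_univ, true_and, Nat.cast_add, ZMod.natCast_zmod_val,
    neg_add_eq_sub, eq_sub_iff_add_eq]

theorem card_isParkingCode_add [NeZero (n + z)] (g : Fin n → ZMod (n + z)) :
    #{k : ZMod (n + z) | IsParkingCode z (fun t => g t + k)} = z := by
  have hD (i : ℕ) : #{t | g t = ((i + (n + z) : ℕ) : ZMod (n + z))} = #{t | g t = i} := by
    rw [Nat.cast_add, ZMod.natCast_self, add_zero]
  have hsum : ∑ i ∈ range (n + z), #{t | g t = i} + z = n + z := by
    rw [← card_val_lt_eq_sum g le_rfl, filter_true_of_mem fun t _ => ZMod.val_lt _, card_univ,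
      Fintype.card_fin]
  refine Eq.trans ?_ (card_isGoodShift hD hsum (NeZero.pos _))
  refine card_nbij' (fun k => (-k).val) (fun p => -(p : ZMod (n + z))) (fun k hk => ?_)
    (fun p hp => ?_) (fun k _ => by simp) (fun p hp => ?_)
  · simp only [coe_filter, mem_univ, true_and, Set.mem_ofPred_eq, mem_range] at hk ⊢
    exact ⟨ZMod.val_lt _, (isParkingCode_add_iff g k).mp hk⟩
  · simp only [coe_filter, mem_univ, true_and, Set.mem_ofPred_eq, mem_range] at hp ⊢
    rw [isParkingCode_add_iff, neg_neg, ZMod.val_natCast_of_lt hp.1]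
    exact hp.2
  · simp only [coe_filter, Set.mem_ofPred_eq, mem_range] at hp
    simp [ZMod.val_natCast_of_lt hp.1]

theorem card_isParkingCode_mul [NeZero (n + z)] :
    #{g : Fin n → ZMod (n + z) | IsParkingCode z g} * (n + z) = z * (n + z) ^ n := by
  have htranslate (k : ZMod (n + z)) :
      #{g : Fin n → ZMod (n + z) | IsParkingCode z (fun t => g t + k)} =
        #{g : Fin n → ZMod (n + z) | IsParkingCode z g} :=
    card_equiv (Equiv.addRight fun _ => k) fun g => by
      simp only [mem_filter, mem_univ, true_and, Equiv.coe_addRight]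
      rfl
  calc #{g : Fin n → ZMod (n + z) | IsParkingCode z g} * (n + z)
      = ∑ k : ZMod (n + z), #{g : Fin n → ZMod (n + z) | IsParkingCode z (fun t => g t + k)} := by
        simp [htranslate, mul_comm]
    _ = ∑ g : Fin n → ZMod (n + z), #{k : ZMod (n + z) | IsParkingCode z (fun t => g t + k)} := by
        simp only [card_filter]
        exact sum_comm
    _ = z * (n + z) ^ n := by simp [card_isParkingCode_add, mul_comm]

end ParkingCode

theorem List.countP_ofFn {α : Type*} {n : ℕ} (f : Fin n → α) (p : α → Bool) :
    (List.ofFn f).countP p = #{t | p (f t)} := by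
  induction n with
  | zero => simp
  | succ n ih =>
    rw [List.ofFn_succ, List.countP_cons, ih, card_filter, card_filter, Fin.sum_univ_succ,
      add_comm]

theorem isTailBounded_ofFn_iff {n z : ℕ} (g : Fin n → ZMod (n + z)) :
    IsTailBounded n z (List.ofFn fun t => (g t).val + 1) ↔ IsParkingCode z g := by
  simp only [IsTailBounded, List.length_ofFn, List.mem_ofFn, true_and, List.countP_ofFn,
    decide_eq_true_eq]
  have hsplit (m : ℕ) : #{t | m + 1 ≤ (g t).val + 1} + #{t | (g t).val < m} = n := by
    have := card_filter_add_card_filter_not (s := (univ : Finset (Fin n)))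
      fun t => (g t).val < m
    rw [card_univ, Fintype.card_fin] at this
    refine (add_comm _ _).trans (Eq.trans ?_ this)
    congr 2
    ext
    simp only [mem_filter, mem_univ, true_and]
    omega
  constructor
  · rintro ⟨-, h⟩ m hm
    have := h (m + 1) hm
    have := hsplit m
    omega
  · intro h
    refine ⟨fun c ⟨t, ht⟩ => ht ▸ Nat.le_add_left 1 _, fun s hs => ?_⟩
    rcases s with _ | m
    · have : #{x | 0 ≤ (g x).val + 1} ≤ n := (card_filter_le _ _).trans_eq (by simp)
      omega
    · have := h m (by omega)
      have := hsplit m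
      omega

theorem IsTailBounded.exists_ofFn_eq {n z : ℕ} {cs : List ℕ} (h : IsTailBounded n z cs) :
    ∃ g : Fin n → ZMod (n + z), (List.ofFn fun t => (g t).val + 1) = cs := by
  have hlt := h.lt
  obtain ⟨hlen, hpos, -⟩ := h
  subst hlen
  refine ⟨fun t => ((cs[t] - 1 : ℕ) : ZMod (cs.length + z)), List.ext_getElem (by simp)
    fun i hi _ => ?_⟩
  have hmem := List.getElem_mem (l := cs) (by simpa using hi)
  simp only [List.getElem_ofFn, Fin.getElem_fin]
  rw [ZMod.val_natCast_of_lt (by have := hlt _ hmem; omega)]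
  have := hpos _ hmem
  omega

theorem ncard_isTailBounded {n z : ℕ} [NeZero (n + z)] (hn : 1 ≤ n) :
    {cs : List ℕ | IsTailBounded n z cs}.ncard = z * (n + z) ^ (n - 1) := by
  have himage : {cs : List ℕ | IsTailBounded n z cs} =
      (fun g : Fin n → ZMod (n + z) => List.ofFn fun t => (g t).val + 1) ''
        ↑({g | IsParkingCode z g} : Finset (Fin n → ZMod (n + z))) := by
    ext cs
    simp only [Set.mem_ofPred_eq, coe_filter, mem_univ, true_and, Set.mem_image]
    constructor
    · intro h
      obtain ⟨g, rfl⟩ := h.exists_ofFn_eq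
      exact ⟨g, (isTailBounded_ofFn_iff g).mp h, rfl⟩
    · rintro ⟨g, hg, rfl⟩
      exact (isTailBounded_ofFn_iff g).mpr hg
  have hinj : Function.Injective fun g : Fin n → ZMod (n + z) => List.ofFn fun t => (g t).val + 1 :=
    fun g g' hgg' => funext fun t => ZMod.val_injective _ (by
      have := congrFun (List.ofFn_inj.mp hgg') t
      simpa using this)
  rw [himage, Set.ncard_image_of_injective _ hinj, Set.ncard_coe_finset]
  have hcount := card_isParkingCode_mul (n := n) (z := z)
  have hpow : (n + z) ^ n = (n + z) ^ (n - 1) * (n + z) := by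
    rw [← pow_succ, Nat.sub_add_cancel hn]
  rw [hpow, ← mul_assoc] at hcount
  exact Nat.eq_of_mul_eq_mul_right (NeZero.pos _) hcount

theorem stmt15 (n a z : ℕ) (hn : 1 ≤ n) (ha : 1 < a) (hz : 0 < z) :
    {cs : List ℕ | PermInvariant (a :: List.replicate (n - 1) 1) cs z} =
      {cs : List ℕ | IsUPF ((List.range n).map (fun i => z + i)) cs} ∧
    {cs : List ℕ | PermInvariant (a :: List.replicate (n - 1) 1) cs z}.ncard
      = z * (n + z) ^ (n - 1) := by
  have : NeZero (n + z) := ⟨by omega⟩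
  have hPI : {cs : List ℕ | PermInvariant (a :: List.replicate (n - 1) 1) cs z} =
      {cs : List ℕ | IsTailBounded n z cs} :=
    Set.ext fun _ => permInvariant_iff_isTailBounded hn (by omega) hz
  have hUPF : {cs : List ℕ | IsUPF ((List.range n).map (fun i => z + i)) cs} =
      {cs : List ℕ | IsTailBounded n z cs} :=
    Set.ext fun _ => isUPF_iff_isTailBounded
  rw [hPI, hUPF]
  exact ⟨rfl, ncard_isTailBounded hn⟩
end

section
/- Let c = (c_1,...,c_n) be a parking sequence for (y;z). Then c parks y in the standard order (final configuration is trailer, C_1, C_2, ..., C_n with no gaps) if and only if c_k ≤ z + y_1 + ... + y_{k-1} for all k ∈ [n]. -/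
open Finset

/-! Induction on the number of cars, treating the cars already parked as part of the trailer:
while the occupied spots are exactly `1, …, z - 1`, a car with preference `c ≤ z` takes spot `z`
and leaves the street in the same shape with `z + y` in place of `z`, whereas a car with `c > z`
parks at or after `c`, hence not at `z`. -/

lemma firstEmpty_ge {occ : Finset ℕ} {M c j : ℕ} (h : firstEmpty occ M c = some j) : c ≤ j :=
  (List.mem_range'_1.mp (List.mem_of_find?_eq_some h)).1

lemma firstEmpty_Ico_one {M c z : ℕ} (hc : 1 ≤ c) (hcz : c ≤ z) (hzM : z ≤ M) :
    firstEmpty (Ico 1 z) M c = some z := by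
  have hsplit :
      List.range' c (M + 1 - c) = List.range' c (z - c) ++ List.range' z (M + 1 - z) := by
    have := List.range'_append (s := c) (m := z - c) (n := M + 1 - z) (step := 1)
    rwa [show c + 1 * (z - c) = z by omega, show z - c + (M + 1 - z) = M + 1 - c by omega,
      eq_comm] at this
  have htrailer : (List.range' c (z - c)).find? (fun j => decide (j ∉ Ico 1 z)) = none := by
    rw [List.find?_eq_none]
    intro j hj
    rw [List.mem_range'_1] at hj
    simp only [mem_Ico, decide_eq_true_eq, not_not]
    omega
  rw [firstEmpty, hsplit, List.find?_append, htrailer, show M + 1 - z = (M - z) + 1 by omega,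
    List.range'_succ]
  simp

lemma parkAux_cons_head_ge {M : ℕ} {occ : Finset ℕ} {c y j : ℕ} {cs ys l : List ℕ}
    (h : parkAux M occ (c :: cs) (y :: ys) = some (j :: l)) : c ≤ j := by
  unfold parkAux at h
  split at h
  · simp at h
  · rename_i i hi
    split_ifs at h
    obtain ⟨_, _, rfl, _⟩ := by simpa using h
    exact firstEmpty_ge hi

lemma parkAux_Ico_one_cons {M c y z : ℕ} {cs ys : List ℕ} (hc : 1 ≤ c) (hcz : c ≤ z)
    (hy : 0 < y) (hM : z + y ≤ M + 1) :
    parkAux M (Ico 1 z) (c :: cs) (y :: ys) =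
      (parkAux M (Ico 1 (z + y)) cs ys).map (z :: ·) := by
  have hfits : (∀ i ∈ Ico z (z + y), i ∉ Ico 1 z) ∧ z + y - 1 ≤ M := by
    refine ⟨fun i hi => ?_, by omega⟩
    simp only [mem_Ico] at hi ⊢
    omega
  rw [parkAux, firstEmpty_Ico_one hc hcz (by omega)]
  simp only [if_pos hfits, Ico_union_Ico_eq_Ico (hc.trans hcz) (Nat.le_add_right z y)]

lemma forall_getD_le_cons_iff {c z y : ℕ} {cs ys : List ℕ} :
    (∀ k < (y :: ys).length, (c :: cs).getD k 0 ≤ z + ((y :: ys).take k).sum) ↔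
      c ≤ z ∧ ∀ k < ys.length, cs.getD k 0 ≤ z + y + (ys.take k).sum := by
  simp only [List.length_cons, Nat.forall_lt_succ_left, List.getD_cons_zero, List.take_zero,
    List.sum_nil, add_zero, List.getD_cons_succ, List.take_succ_cons, List.sum_cons, add_assoc]

lemma parkAux_Ico_one_eq_standardStarts_iff {ys cs : List ℕ} {z M : ℕ}
    (hys : ∀ y ∈ ys, 0 < y) (hcs : ∀ c ∈ cs, 1 ≤ c) (hlen : cs.length = ys.length)
    (hM : z - 1 + ys.sum ≤ M) :
    parkAux M (Ico 1 z) cs ys = some (standardStarts z ys) ↔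
      ∀ k < ys.length, cs.getD k 0 ≤ z + (ys.take k).sum := by
  induction ys generalizing cs z with
  | nil =>
    rw [List.length_nil, List.length_eq_zero_iff] at hlen
    subst hlen
    simp [parkAux, standardStarts]
  | cons y ys ih =>
    obtain ⟨c, cs, rfl⟩ := List.exists_cons_of_length_eq_add_one hlen
    rw [forall_getD_le_cons_iff, standardStarts]
    have hy : 0 < y := hys y List.mem_cons_self
    have hc : 1 ≤ c := hcs c List.mem_cons_self
    rw [List.sum_cons] at hM
    by_cases hcz : c ≤ z
    · rw [parkAux_Ico_one_cons hc hcz hy (by omega), Option.map_eq_some_iff]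
      simp only [List.cons.injEq, true_and, exists_eq_right, and_iff_right hcz]
      exact ih (fun y hy' => hys y (List.mem_cons_of_mem _ hy'))
        (fun c hc' => hcs c (List.mem_cons_of_mem _ hc')) (by simpa using hlen) (by omega)
    · exact iff_of_false (fun h => hcz (parkAux_cons_head_ge h)) (fun h => hcz h.1)

theorem stmt16_general (z : ℕ) (ys cs : List ℕ) (hypos : ∀ y ∈ ys, 0 < y)
    (hps : IsParkingSeq ys cs z) :
    ParksStandard ys cs z ↔ ∀ k < ys.length, cs.getD k 0 ≤ z + (ys.take k).sum :=
  parkAux_Ico_one_eq_standardStarts_iff hypos hps.2.1 hps.1 le_rfl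

theorem stmt16 (z : ℕ) (hz : 0 < z) (ys cs : List ℕ) (hypos : ∀ y ∈ ys, 0 < y)
    (hps : IsParkingSeq ys cs z) :
    ParksStandard ys cs z ↔ ∀ k < ys.length, cs.getD k 0 ≤ z + (ys.take k).sum :=
  stmt16_general z ys cs hypos hps
end
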